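/- arXiv:1903.06871 — 5 statements merged into one kernel-verified Lean document; each statement's English description precedes it below -/
import Mathlib

section
/- (Theorem 1, convergence to stationary points.) Under Assumption A: ‖∇̃𝓛(x^t)‖ → 0 as t → ∞, and every limit point x̂ of the sequence {x^t} is a stationary point of 𝓛, i.e. x̂ = Prox_h(x̂ − (1/m)Σ_{j=1}^m ∇L_j(x̂)). -/
open scoped RealInnerProductSpace

private lemma small_s {K M : ℝ} (H : ∀ s : ℝ, 0 < s → s ≤ 1 → K ≤ s * M) : K ≤ 0 := by
  by_contra hK
  push_neg at hK
  rcases le_or_gt M 0 with hM | hM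
  · have := H 1 one_pos le_rfl
    nlinarith
  · have hs1 : (0:ℝ) < min 1 (K / (2 * M)) := by positivity
    have := H _ hs1 (min_le_left _ _)
    have h2 : min 1 (K / (2 * M)) * M ≤ (K / (2 * M)) * M :=
      mul_le_mul_of_nonneg_right (min_le_right _ _) hM.le
    have h3 : (K / (2 * M)) * M = K / 2 := by field_simp
    nlinarith

private lemma line_hasDerivAt {p : ℕ} (f : EuclideanSpace ℝ (Fin p) → ℝ)
    (hd : Differentiable ℝ f) (a v : EuclideanSpace ℝ (Fin p)) (s : ℝ) :
    HasDerivAt (fun t : ℝ => f (a + t • v)) ⟪gradient f (a + s • v), v⟫ s := by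
  have hline : HasDerivAt (fun t : ℝ => a + t • v) v s := by
    simpa using ((hasDerivAt_id s).smul_const v).const_add a
  have hf := (hd (a + s • v)).hasGradientAt.hasFDerivAt
  have := hf.comp_hasDerivAt s hline
  simpa [InnerProductSpace.toDual_apply_apply, Function.comp_def] using this

private lemma descent_lemma {p : ℕ} {L : ℝ} (hL : 0 < L) (f : EuclideanSpace ℝ (Fin p) → ℝ)
    (hd : Differentiable ℝ f)
    (hlip : ∀ u v, ‖gradient f u - gradient f v‖ ≤ L * ‖u - v‖)
    (a v : EuclideanSpace ℝ (Fin p)) :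
    f (a + v) ≤ f a + ⟪gradient f a, v⟫ + L / 2 * ‖v‖ ^ 2 := by
  set φ : ℝ → ℝ := fun s => f (a + s • v) - s * ⟪gradient f a, v⟫ - L / 2 * s ^ 2 * ‖v‖ ^ 2 with hφ
  have hder : ∀ s : ℝ, HasDerivAt φ
      (⟪gradient f (a + s • v), v⟫ - ⟪gradient f a, v⟫ - L * s * ‖v‖ ^ 2) s := by
    intro s
    have h1 := line_hasDerivAt f hd a v s
    have h2 : HasDerivAt (fun t : ℝ => t * ⟪gradient f a, v⟫) ⟪gradient f a, v⟫ s := by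
      simpa using (hasDerivAt_id s).mul_const (⟪gradient f a, v⟫)
    have h3 : HasDerivAt (fun t : ℝ => L / 2 * t ^ 2 * ‖v‖ ^ 2) (L * s * ‖v‖ ^ 2) s := by
      have : HasDerivAt (fun t : ℝ => t ^ 2) (2 * s) s := by
        simpa using (hasDerivAt_pow 2 s)
      have := (this.const_mul (L / 2)).mul_const (‖v‖ ^ 2)
      convert this using 1
      exacts [rfl, rfl, by ring]
    exact (h1.sub h2).sub h3
  have hmono : AntitoneOn φ (Set.Icc 0 1) := by
    apply antitoneOn_of_deriv_nonpos (convex_Icc 0 1)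
    · exact fun s _ => ((hder s).continuousAt).continuousWithinAt
    · exact fun s _ => ((hder s).differentiableAt).differentiableWithinAt
    · intro s hs
      rw [interior_Icc] at hs
      rw [(hder s).deriv]
      have hin : ⟪gradient f (a + s • v) - gradient f a, v⟫ ≤ L * s * ‖v‖ ^ 2 := by
        calc ⟪gradient f (a + s • v) - gradient f a, v⟫ ≤
            ‖gradient f (a + s • v) - gradient f a‖ * ‖v‖ := real_inner_le_norm _ _
          _ ≤ (L * ‖(a + s • v) - a‖) * ‖v‖ :=
              mul_le_mul_of_nonneg_right (hlip _ _) (norm_nonneg _)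
          _ = L * s * ‖v‖ ^ 2 := by
              rw [add_sub_cancel_left, norm_smul, Real.norm_eq_abs, abs_of_pos hs.1]
              ring
      rw [inner_sub_left] at hin
      linarith
  have h01 := hmono (Set.mem_Icc.2 ⟨le_rfl, zero_le_one⟩) (Set.mem_Icc.2 ⟨zero_le_one, le_rfl⟩)
    zero_le_one
  simp only [hφ, zero_smul, add_zero, one_smul, zero_mul, sub_zero, zero_pow, mul_zero,
    one_pow, mul_one] at h01
  linarith

private lemma prox_subgrad {p : ℕ} (h : EuclideanSpace ℝ (Fin p) → ℝ)
    (hconv : ConvexOn ℝ Set.univ h)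
    (prox : EuclideanSpace ℝ (Fin p) → EuclideanSpace ℝ (Fin p))
    (hprox : ∀ z y, h (prox z) + 1 / 2 * ‖prox z - z‖ ^ 2 ≤ h y + 1 / 2 * ‖y - z‖ ^ 2)
    (z w : EuclideanSpace ℝ (Fin p)) :
    ⟪z - prox z, w - prox z⟫ ≤ h w - h (prox z) := by
  set P := prox z with hP
  have key : ∀ s : ℝ, 0 < s → s ≤ 1 →
      ⟪z - P, w - P⟫ - (h w - h P) ≤ s * (‖w - P‖ ^ 2 / 2) := by
    intro s hs0 hs1
    have hcv := hconv.2 (Set.mem_univ P) (Set.mem_univ w) (by linarith : (0:ℝ) ≤ 1 - s)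
      hs0.le (by ring)
    have hmin := hprox z ((1 - s) • P + s • w)
    have hexp : ‖(1 - s) • P + s • w - z‖ ^ 2
        = ‖P - z‖ ^ 2 + 2 * s * ⟪P - z, w - P⟫ + s ^ 2 * ‖w - P‖ ^ 2 := by
      have : (1 - s) • P + s • w - z = (P - z) + s • (w - P) := by
        rw [sub_smul, one_smul, smul_sub]; abel
      rw [this, norm_add_sq_real, real_inner_smul_right, norm_smul, Real.norm_eq_abs,
        mul_pow, sq_abs]
      ring
    simp only [smul_eq_mul] at hcv
    have hinner : ⟪P - z, w - P⟫ = - ⟪z - P, w - P⟫ := by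
      rw [← inner_neg_left]; congr 1; abel
    nlinarith [hmin, hcv, hexp]
  have := small_s key
  linarith

private lemma prox_nonexpansive {p : ℕ} (h : EuclideanSpace ℝ (Fin p) → ℝ)
    (hconv : ConvexOn ℝ Set.univ h)
    (prox : EuclideanSpace ℝ (Fin p) → EuclideanSpace ℝ (Fin p))
    (hprox : ∀ z y, h (prox z) + 1 / 2 * ‖prox z - z‖ ^ 2 ≤ h y + 1 / 2 * ‖y - z‖ ^ 2)
    (z₁ z₂ : EuclideanSpace ℝ (Fin p)) :
    ‖prox z₁ - prox z₂‖ ≤ ‖z₁ - z₂‖ := by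
  have h1 := prox_subgrad h hconv prox hprox z₁ (prox z₂)
  have h2 := prox_subgrad h hconv prox hprox z₂ (prox z₁)
  set P₁ := prox z₁; set P₂ := prox z₂
  have hsum : ⟪z₁ - P₁, P₂ - P₁⟫ + ⟪z₂ - P₂, P₁ - P₂⟫ ≤ 0 := by linarith
  have hkey : ‖P₁ - P₂‖ ^ 2 ≤ ⟪z₁ - z₂, P₁ - P₂⟫ := by
    have e1 : ⟪z₁ - P₁, P₂ - P₁⟫ = - ⟪z₁ - P₁, P₁ - P₂⟫ := by
      rw [← inner_neg_right]; congr 1; abel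
    have e2 : ⟪z₂ - P₂, P₁ - P₂⟫ = ⟪z₂ - P₂, P₁ - P₂⟫ := rfl
    have expand : ⟪z₁ - z₂, P₁ - P₂⟫ - ‖P₁ - P₂‖ ^ 2
        = ⟪z₁ - P₁, P₁ - P₂⟫ - ⟪z₂ - P₂, P₁ - P₂⟫ := by
      rw [← inner_sub_left, ← real_inner_self_eq_norm_sq, ← inner_sub_left]
      congr 1
      abel
    nlinarith [hsum, expand, e1]
  have hcs : ⟪z₁ - z₂, P₁ - P₂⟫ ≤ ‖z₁ - z₂‖ * ‖P₁ - P₂‖ := real_inner_le_norm _ _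
  rcases eq_or_lt_of_le (norm_nonneg (P₁ - P₂)) with h0 | h0
  · rw [← h0]; exact norm_nonneg _
  · nlinarith

private lemma norm_sub_le_sum {p : ℕ} (x : ℕ → EuclideanSpace ℝ (Fin p)) {a b : ℕ} (hab : a ≤ b) :
    ‖x b - x a‖ ≤ ∑ s ∈ Finset.Ico a b, ‖x (s + 1) - x s‖ := by
  induction b, hab using Nat.le_induction with
  | base => simp
  | succ b hab ih =>
    rw [Finset.sum_Ico_succ_top hab]
    calc ‖x (b + 1) - x a‖ ≤ ‖x b - x a‖ + ‖x (b + 1) - x b‖ := by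
          have : x (b + 1) - x a = (x b - x a) + (x (b + 1) - x b) := by abel
          rw [this]; exact norm_add_le _ _
      _ ≤ _ := by linarith

private lemma sum_window_le {τ : ℕ} (D : ℕ → ℝ) (hD : ∀ s, 0 ≤ D s) (T : ℕ) :
    ∑ t ∈ Finset.range T, ∑ s ∈ Finset.Ico (t - τ) t, D s
      ≤ (τ : ℝ) * ∑ s ∈ Finset.range T, D s := by
  have hswap : ∑ t ∈ Finset.range T, ∑ s ∈ Finset.Ico (t - τ) t, D s
      = ∑ s ∈ Finset.range T, ∑ t ∈ Finset.Ico (s + 1) (min (s + τ + 1) T), D s := by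
    apply Finset.sum_comm'
    intro t s
    simp only [Finset.mem_range, Finset.mem_Ico, lt_min_iff]
    constructor
    · rintro ⟨hT, hts, hst⟩
      have : t ≤ s + τ := by omega
      exact ⟨⟨by omega, by omega, hT⟩, by omega⟩
    · rintro ⟨⟨h1, h2, h3⟩, h4⟩
      exact ⟨h3, by omega, by omega⟩
  rw [hswap]
  calc ∑ s ∈ Finset.range T, ∑ t ∈ Finset.Ico (s + 1) (min (s + τ + 1) T), D s
      = ∑ s ∈ Finset.range T, ((Finset.Ico (s + 1) (min (s + τ + 1) T)).card : ℝ) * D s := by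
        apply Finset.sum_congr rfl; intro s _; rw [Finset.sum_const, nsmul_eq_mul]
    _ ≤ ∑ s ∈ Finset.range T, (τ : ℝ) * D s := by
        apply Finset.sum_le_sum; intro s _
        apply mul_le_mul_of_nonneg_right _ (hD s)
        have : (Finset.Ico (s + 1) (min (s + τ + 1) T)).card ≤ τ := by
          rw [Nat.card_Ico]; omega
        exact_mod_cast this
    _ = (τ : ℝ) * ∑ s ∈ Finset.range T, D s := by rw [Finset.mul_sum]

private lemma subg_strong {p : ℕ} {L ρ γ : ℝ} (hL : 0 < L)
    (f : EuclideanSpace ℝ (Fin p) → ℝ) (hd : Differentiable ℝ f)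
    (hflip : ∀ u v, ‖gradient f u - gradient f v‖ ≤ L * ‖u - v‖)
    (h : EuclideanSpace ℝ (Fin p) → ℝ) (x0 x1 dvec : EuclideanSpace ℝ (Fin p))
    (hstrong : StrongConvexOn Set.univ γ (fun y => h y + ρ / 2 * ‖y - x0‖ ^ 2))
    (hupd : ∀ y, f x1 + h x1 + ρ / 2 * ‖x1 - x0‖ ^ 2 + ⟪dvec, x1 - x0⟫ ≤
      f y + h y + ρ / 2 * ‖y - x0‖ ^ 2 + ⟪dvec, y - x0⟫)
    (y : EuclideanSpace ℝ (Fin p)) :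
    h x1 + ρ / 2 * ‖x1 - x0‖ ^ 2 + γ / 2 * ‖y - x1‖ ^ 2 ≤
      h y + ρ / 2 * ‖y - x0‖ ^ 2 + ⟪gradient f x1 + dvec, y - x1⟫ := by
  have key : ∀ s : ℝ, 0 < s → s ≤ 1 →
      h x1 + ρ / 2 * ‖x1 - x0‖ ^ 2 + γ / 2 * ‖y - x1‖ ^ 2
        - h y - ρ / 2 * ‖y - x0‖ ^ 2 - ⟪gradient f x1 + dvec, y - x1⟫
        ≤ s * ((L + γ) / 2 * ‖y - x1‖ ^ 2) := by
    intro s hs0 hs1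
    set ys := x1 + s • (y - x1) with hys
    have hupds := hupd ys
    have hdesc : f ys ≤ f x1 + s * ⟪gradient f x1, y - x1⟫ + L / 2 * s ^ 2 * ‖y - x1‖ ^ 2 := by
      have := descent_lemma hL f hd hflip x1 (s • (y - x1))
      rw [real_inner_smul_right, norm_smul, Real.norm_eq_abs, mul_pow, sq_abs] at this
      calc f ys ≤ f x1 + s * ⟪gradient f x1, y - x1⟫ + L / 2 * (s ^ 2 * ‖y - x1‖ ^ 2) := this
        _ = _ := by ring
    have hys2 : ys = (1 - s) • x1 + s • y := by
      rw [hys, smul_sub, sub_smul, one_smul]; abel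
    have hsc : h ys + ρ / 2 * ‖ys - x0‖ ^ 2 ≤
        (1 - s) * (h x1 + ρ / 2 * ‖x1 - x0‖ ^ 2) + s * (h y + ρ / 2 * ‖y - x0‖ ^ 2)
          - (1 - s) * s * (γ / 2 * ‖x1 - y‖ ^ 2) := by
      have := hstrong.2 (Set.mem_univ x1) (Set.mem_univ y)
        (by linarith : (0:ℝ) ≤ 1 - s) hs0.le (by ring)
      simp only [smul_eq_mul] at this
      rw [← hys2] at this
      exact this
    have hlin : ⟪dvec, ys - x0⟫ = ⟪dvec, x1 - x0⟫ + s * ⟪dvec, y - x1⟫ := by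
      have : ys - x0 = (x1 - x0) + s • (y - x1) := by rw [hys]; abel
      rw [this, inner_add_right, real_inner_smul_right]
    have hnrev : ‖x1 - y‖ = ‖y - x1‖ := norm_sub_rev _ _
    rw [hlin] at hupds
    rw [inner_add_left]
    rw [hnrev] at hsc
    have hmul : s * (h x1 + ρ / 2 * ‖x1 - x0‖ ^ 2 + γ / 2 * ‖y - x1‖ ^ 2
        - h y - ρ / 2 * ‖y - x0‖ ^ 2 - (⟪gradient f x1, y - x1⟫ + ⟪dvec, y - x1⟫))
        ≤ s * (s * ((L + γ) / 2 * ‖y - x1‖ ^ 2)) := by nlinarith [hupds, hdesc, hsc]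
    exact le_of_mul_le_mul_left (by linarith [hmul]) hs0
  have := small_s (M := (L + γ) / 2 * ‖y - x1‖ ^ 2) key
  rw [inner_add_left] at this ⊢
  linarith

private lemma subg_plain {p : ℕ} {L ρ : ℝ} (hL : 0 < L) (hρ : 0 < ρ)
    (f : EuclideanSpace ℝ (Fin p) → ℝ) (hd : Differentiable ℝ f)
    (hflip : ∀ u v, ‖gradient f u - gradient f v‖ ≤ L * ‖u - v‖)
    (h : EuclideanSpace ℝ (Fin p) → ℝ) (hconv : ConvexOn ℝ Set.univ h)
    (x0 x1 dvec : EuclideanSpace ℝ (Fin p))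
    (hupd : ∀ y, f x1 + h x1 + ρ / 2 * ‖x1 - x0‖ ^ 2 + ⟪dvec, x1 - x0⟫ ≤
      f y + h y + ρ / 2 * ‖y - x0‖ ^ 2 + ⟪dvec, y - x0⟫)
    (y : EuclideanSpace ℝ (Fin p)) :
    h x1 ≤ h y + ⟪gradient f x1 + dvec + ρ • (x1 - x0), y - x1⟫ := by
  have key : ∀ s : ℝ, 0 < s → s ≤ 1 →
      h x1 - h y - ⟪gradient f x1 + dvec + ρ • (x1 - x0), y - x1⟫
        ≤ s * ((L + ρ) / 2 * ‖y - x1‖ ^ 2) := by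
    intro s hs0 hs1
    set ys := x1 + s • (y - x1) with hys
    have hupds := hupd ys
    have hdesc : f ys ≤ f x1 + s * ⟪gradient f x1, y - x1⟫ + L / 2 * s ^ 2 * ‖y - x1‖ ^ 2 := by
      have := descent_lemma hL f hd hflip x1 (s • (y - x1))
      rw [real_inner_smul_right, norm_smul, Real.norm_eq_abs, mul_pow, sq_abs] at this
      calc f ys ≤ f x1 + s * ⟪gradient f x1, y - x1⟫ + L / 2 * (s ^ 2 * ‖y - x1‖ ^ 2) := this
        _ = _ := by ring
    have hys2 : ys = (1 - s) • x1 + s • y := by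
      rw [hys, smul_sub, sub_smul, one_smul]; abel
    have hcv : h ys ≤ (1 - s) * h x1 + s * h y := by
      have := hconv.2 (Set.mem_univ x1) (Set.mem_univ y)
        (by linarith : (0:ℝ) ≤ 1 - s) hs0.le (by ring)
      simp only [smul_eq_mul] at this
      rw [← hys2] at this
      exact this
    have hexp : ‖ys - x0‖ ^ 2 = ‖x1 - x0‖ ^ 2 + 2 * s * ⟪x1 - x0, y - x1⟫
        + s ^ 2 * ‖y - x1‖ ^ 2 := by
      have : ys - x0 = (x1 - x0) + s • (y - x1) := by rw [hys]; abel
      rw [this, norm_add_sq_real, real_inner_smul_right, norm_smul, Real.norm_eq_abs,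
        mul_pow, sq_abs]
      ring
    have hlin : ⟪dvec, ys - x0⟫ = ⟪dvec, x1 - x0⟫ + s * ⟪dvec, y - x1⟫ := by
      have : ys - x0 = (x1 - x0) + s • (y - x1) := by rw [hys]; abel
      rw [this, inner_add_right, real_inner_smul_right]
    rw [hlin, hexp] at hupds
    rw [inner_add_left, inner_add_left, real_inner_smul_left]
    have hmul : s * (h x1 - h y - (⟪gradient f x1, y - x1⟫ + ⟪dvec, y - x1⟫
        + ρ * ⟪x1 - x0, y - x1⟫)) ≤ s * (s * ((L + ρ) / 2 * ‖y - x1‖ ^ 2)) := by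
      nlinarith [hupds, hdesc, hcv]
    exact le_of_mul_le_mul_left (by linarith [hmul]) hs0
  have := small_s (M := (L + ρ) / 2 * ‖y - x1‖ ^ 2) key
  rw [inner_add_left, inner_add_left, real_inner_smul_left] at this ⊢
  linarith

set_option maxHeartbeats 1000000 in
theorem stmt_9
    {p m τ : ℕ} (hp : 1 ≤ p) (hm : 0 < m)
    {L ρ γ : ℝ}
    (hL : 0 < L) (hρ : 0 < ρ) (hγ : 0 < γ)
    (Lf : Fin m → EuclideanSpace ℝ (Fin p) → ℝ)
    (hdiff : ∀ j, Differentiable ℝ (Lf j))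
    (hlip : ∀ j (u v : EuclideanSpace ℝ (Fin p)), ‖gradient (Lf j) u - gradient (Lf j) v‖ ≤ L * ‖u - v‖)
    (h : EuclideanSpace ℝ (Fin p) → ℝ)
    (hconv : ConvexOn ℝ Set.univ h)
    (hstrong : ∀ z : EuclideanSpace ℝ (Fin p), StrongConvexOn Set.univ γ (fun y => h y + ρ / 2 * ‖y - z‖ ^ 2))
    (tj : ℕ → Fin m → ℕ)
    (htj : ∀ t j, t - τ ≤ tj t j ∧ tj t j ≤ t)
    (x : ℕ → EuclideanSpace ℝ (Fin p))
    (hupdate : ∀ t, ∀ y : EuclideanSpace ℝ (Fin p),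
      Lf ⟨0, hm⟩ (x (t + 1)) + h (x (t + 1)) + ρ / 2 * ‖x (t + 1) - x t‖ ^ 2 +
          ⟪((m : ℝ)⁻¹ • ∑ j, gradient (Lf j) (x (tj t j))) - gradient (Lf ⟨0, hm⟩) (x (tj t ⟨0, hm⟩)), x (t + 1) - x t⟫ ≤
        Lf ⟨0, hm⟩ y + h y + ρ / 2 * ‖y - x t‖ ^ 2 +
          ⟪((m : ℝ)⁻¹ • ∑ j, gradient (Lf j) (x (tj t j))) - gradient (Lf ⟨0, hm⟩) (x (tj t ⟨0, hm⟩)), y - x t⟫)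
    (prox : EuclideanSpace ℝ (Fin p) → EuclideanSpace ℝ (Fin p))
    (hprox : ∀ z y, h (prox z) + 1 / 2 * ‖prox z - z‖ ^ 2 ≤ h y + 1 / 2 * ‖y - z‖ ^ 2)
    (hproxuniq : ∀ z y, (∀ w, h y + 1 / 2 * ‖y - z‖ ^ 2 ≤ h w + 1 / 2 * ‖w - z‖ ^ 2) → y = prox z)
    (δ : ℝ) (hδ : 0 < δ)
    (hA1 : 3 * L + 2 * L * δ * τ < γ)
    (hA2 : 2 * L * τ / δ < ρ)
    (Llo : ℝ) (hLlo : ∀ y : EuclideanSpace ℝ (Fin p), Llo < (((m : ℝ)⁻¹ * ∑ j, Lf j (y)) + h (y)))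
    :
    Filter.Tendsto (fun t => ‖(x t - prox (x t - (m : ℝ)⁻¹ • (∑ j, gradient (Lf j) (x t))))‖) Filter.atTop (nhds 0) ∧
      ∀ xhat : EuclideanSpace ℝ (Fin p),
        (∃ φ : ℕ → ℕ, StrictMono φ ∧ Filter.Tendsto (fun n => x (φ n)) Filter.atTop (nhds xhat)) →
        xhat = prox (xhat - (m : ℝ)⁻¹ • (∑ j, gradient (Lf j) xhat)) := by
  have hm' : (0:ℝ) < m := by exact_mod_cast hm
  set j0 : Fin m := ⟨0, hm⟩ with hj0
  set E : ℕ → ℝ := fun t => ‖x (t + 1) - x t‖ with hE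
  have hEnn : ∀ t, 0 ≤ E t := fun t => norm_nonneg _
  set W : ℕ → ℝ := fun t => ∑ s ∈ Finset.Ico (t - τ) t, E s with hW
  set S : ℕ → ℝ := fun t => ∑ s ∈ Finset.Ico (t - τ) t, E s ^ 2 with hS
  have hWnn : ∀ t, 0 ≤ W t := fun t => Finset.sum_nonneg fun s _ => hEnn s
  have hSnn : ∀ t, 0 ≤ S t := fun t => Finset.sum_nonneg fun s _ => sq_nonneg _
  -- the delayed direction
  set dv : ℕ → EuclideanSpace ℝ (Fin p) := fun t =>
    ((m : ℝ)⁻¹ • ∑ j, gradient (Lf j) (x (tj t j))) - gradient (Lf j0) (x (tj t j0)) with hdv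
  -- strong subgradient inequality
  have hsub : ∀ t y, h (x (t + 1)) + ρ / 2 * ‖x (t + 1) - x t‖ ^ 2 + γ / 2 * ‖y - x (t + 1)‖ ^ 2 ≤
      h y + ρ / 2 * ‖y - x t‖ ^ 2 + ⟪gradient (Lf j0) (x (t + 1)) + dv t, y - x (t + 1)⟫ :=
    fun t y => subg_strong hL (Lf j0) (hdiff j0) (hlip j0) h (x t) (x (t + 1)) (dv t)
      (hstrong (x t)) (hupdate t) y
  -- plain subgradient inequality
  have hsub2 : ∀ t y, h (x (t + 1)) ≤ h y +
      ⟪gradient (Lf j0) (x (t + 1)) + dv t + ρ • (x (t + 1) - x t), y - x (t + 1)⟫ :=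
    fun t y => subg_plain hL hρ (Lf j0) (hdiff j0) (hlip j0) h hconv (x t) (x (t + 1)) (dv t)
      (hupdate t) y
  -- fixed point characterization of the iterate
  have hfix : ∀ t, x (t + 1) = prox (x (t + 1) -
      (gradient (Lf j0) (x (t + 1)) + dv t + ρ • (x (t + 1) - x t))) := by
    intro t
    apply hproxuniq
    intro w
    have h1 := hsub2 t w
    generalize gradient (Lf j0) (x (t + 1)) + dv t + ρ • (x (t + 1) - x t) = u at h1 ⊢
    have e1 : x (t + 1) - (x (t + 1) - u) = u := by abel
    have e2 : w - (x (t + 1) - u) = (w - x (t + 1)) + u := by abel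
    rw [e1, e2, norm_add_sq_real]
    have h3 : ⟪w - x (t + 1), u⟫ = ⟪u, w - x (t + 1)⟫ := real_inner_comm _ _
    have h4 := sq_nonneg ‖w - x (t + 1)‖
    linarith
  -- distance from iterate to delayed points
  have hxd : ∀ t (j : Fin m), ‖x (tj t j) - x t‖ ≤ W t := by
    intro t j
    rw [norm_sub_rev]
    calc ‖x t - x (tj t j)‖ ≤ ∑ s ∈ Finset.Ico (tj t j) t, ‖x (s + 1) - x s‖ :=
          norm_sub_le_sum x (htj t j).2
      _ ≤ ∑ s ∈ Finset.Ico (t - τ) t, ‖x (s + 1) - x s‖ :=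
          Finset.sum_le_sum_of_subset_of_nonneg
            (Finset.Ico_subset_Ico (htj t j).1 le_rfl) (fun s _ _ => norm_nonneg _)
      _ = W t := by simp only [hW, hE]
  -- error bound on the averaged delayed gradient
  have hgd : ∀ t, ‖((m : ℝ)⁻¹ • ∑ j, gradient (Lf j) (x (tj t j))) -
      (m : ℝ)⁻¹ • ∑ j, gradient (Lf j) (x t)‖ ≤ L * W t := by
    intro t
    have e0 : ((m : ℝ)⁻¹ • ∑ j, gradient (Lf j) (x (tj t j))) -
        (m : ℝ)⁻¹ • ∑ j, gradient (Lf j) (x t)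
        = (m : ℝ)⁻¹ • ∑ j, (gradient (Lf j) (x (tj t j)) - gradient (Lf j) (x t)) := by
      rw [← smul_sub, ← Finset.sum_sub_distrib]
    rw [e0, norm_smul, Real.norm_eq_abs, abs_of_pos (inv_pos.2 hm')]
    calc (m:ℝ)⁻¹ * ‖∑ j, (gradient (Lf j) (x (tj t j)) - gradient (Lf j) (x t))‖
        ≤ (m:ℝ)⁻¹ * ∑ j, ‖gradient (Lf j) (x (tj t j)) - gradient (Lf j) (x t)‖ := by
          apply mul_le_mul_of_nonneg_left (norm_sum_le _ _) (inv_nonneg.2 hm'.le)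
      _ ≤ (m:ℝ)⁻¹ * ∑ _j : Fin m, L * W t := by
          apply mul_le_mul_of_nonneg_left _ (inv_nonneg.2 hm'.le)
          apply Finset.sum_le_sum
          intro j _
          calc ‖gradient (Lf j) (x (tj t j)) - gradient (Lf j) (x t)‖
              ≤ L * ‖x (tj t j) - x t‖ := hlip j _ _
            _ ≤ L * W t := mul_le_mul_of_nonneg_left (hxd t j) hL.le
      _ = L * W t := by
          rw [Finset.sum_const, Finset.card_univ, Fintype.card_fin, nsmul_eq_mul]
          field_simp
  
  have hG1 : ∀ t, ‖gradient (Lf j0) (x (t + 1)) - gradient (Lf j0) (x (tj t j0))‖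
      ≤ L * (E t + W t) := by
    intro t
    calc ‖gradient (Lf j0) (x (t + 1)) - gradient (Lf j0) (x (tj t j0))‖
        ≤ L * ‖x (t + 1) - x (tj t j0)‖ := hlip j0 _ _
      _ ≤ L * (E t + W t) := by
          apply mul_le_mul_of_nonneg_left _ hL.le
          have e1 : x (t + 1) - x (tj t j0) = (x (t + 1) - x t) + (x t - x (tj t j0)) := by abel
          calc ‖x (t + 1) - x (tj t j0)‖ ≤ ‖x (t + 1) - x t‖ + ‖x t - x (tj t j0)‖ := by
                rw [e1]; exact norm_add_le _ _
            _ ≤ E t + W t := by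
                have := hxd t j0
                rw [norm_sub_rev (x t)]
                simp only [hE]
                exact add_le_add le_rfl this
  -- total error vector bound
  have hErr : ∀ t, ‖gradient (Lf j0) (x (t + 1)) + dv t - (m : ℝ)⁻¹ • ∑ j, gradient (Lf j) (x t)‖
      ≤ L * E t + 2 * L * W t := by
    intro t
    have e0 : gradient (Lf j0) (x (t + 1)) + dv t - (m : ℝ)⁻¹ • ∑ j, gradient (Lf j) (x t)
        = (((m : ℝ)⁻¹ • ∑ j, gradient (Lf j) (x (tj t j))) -
            (m : ℝ)⁻¹ • ∑ j, gradient (Lf j) (x t)) +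
          (gradient (Lf j0) (x (t + 1)) - gradient (Lf j0) (x (tj t j0))) := by
      simp only [hdv]; abel
    rw [e0]
    calc _ ≤ ‖((m : ℝ)⁻¹ • ∑ j, gradient (Lf j) (x (tj t j))) -
            (m : ℝ)⁻¹ • ∑ j, gradient (Lf j) (x t)‖ +
          ‖gradient (Lf j0) (x (t + 1)) - gradient (Lf j0) (x (tj t j0))‖ := norm_add_le _ _
      _ ≤ L * W t + L * (E t + W t) := add_le_add (hgd t) (hG1 t)
      _ = L * E t + 2 * L * W t := by ring
  -- peter-paul
  have hPP : ∀ t, 2 * (W t * E t) ≤ δ * τ * E t ^ 2 + δ⁻¹ * S t := by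
    intro t
    have hterm : ∀ s, 2 * (E s * E t) ≤ δ * E t ^ 2 + δ⁻¹ * E s ^ 2 := by
      intro s
      have h0 : 0 ≤ δ⁻¹ * (δ * E t - E s) ^ 2 := by positivity
      have expand : δ⁻¹ * (δ * E t - E s) ^ 2
          = δ * E t ^ 2 - 2 * (E s * E t) + δ⁻¹ * E s ^ 2 := by
        field_simp
        ring
      linarith
    have hcard : ((Finset.Ico (t - τ) t).card : ℝ) ≤ (τ : ℝ) := by
      rw [Nat.card_Ico]
      exact_mod_cast Nat.sub_le_of_le_add (by omega)
    calc 2 * (W t * E t) = ∑ s ∈ Finset.Ico (t - τ) t, 2 * (E s * E t) := by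
          rw [hW]
          simp only [Finset.sum_mul, Finset.mul_sum]
      _ ≤ ∑ s ∈ Finset.Ico (t - τ) t, (δ * E t ^ 2 + δ⁻¹ * E s ^ 2) :=
          Finset.sum_le_sum fun s _ => hterm s
      _ = ((Finset.Ico (t - τ) t).card : ℝ) * (δ * E t ^ 2) + δ⁻¹ * S t := by
          rw [Finset.sum_add_distrib, Finset.sum_const, nsmul_eq_mul, hS, Finset.mul_sum]
      _ ≤ δ * τ * E t ^ 2 + δ⁻¹ * S t := by
          have h1 : ((Finset.Ico (t - τ) t).card : ℝ) * (δ * E t ^ 2) ≤ (τ:ℝ) * (δ * E t ^ 2) :=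
            mul_le_mul_of_nonneg_right hcard (by positivity)
          nlinarith [h1]
  -- average descent lemma
  have hdesc : ∀ t, (m : ℝ)⁻¹ * ∑ j, Lf j (x (t + 1)) ≤ (m : ℝ)⁻¹ * ∑ j, Lf j (x t) +
      ⟪(m : ℝ)⁻¹ • ∑ j, gradient (Lf j) (x t), x (t + 1) - x t⟫ + L / 2 * E t ^ 2 := by
    intro t
    have hj : ∀ j : Fin m, Lf j (x (t + 1)) ≤ Lf j (x t) +
        ⟪gradient (Lf j) (x t), x (t + 1) - x t⟫ + L / 2 * E t ^ 2 := by
      intro j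
      have := descent_lemma hL (Lf j) (hdiff j) (hlip j) (x t) (x (t + 1) - x t)
      have e1 : x t + (x (t + 1) - x t) = x (t + 1) := by abel
      rw [e1] at this
      simp only [hE]
      exact this
    have hsumj : ∑ j, Lf j (x (t + 1)) ≤ ∑ j, Lf j (x t) +
        ⟪∑ j, gradient (Lf j) (x t), x (t + 1) - x t⟫ + (m:ℝ) * (L / 2 * E t ^ 2) := by
      calc ∑ j, Lf j (x (t + 1)) ≤ ∑ j : Fin m, (Lf j (x t) +
            ⟪gradient (Lf j) (x t), x (t + 1) - x t⟫ + L / 2 * E t ^ 2) :=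
            Finset.sum_le_sum fun j _ => hj j
        _ = _ := by
            rw [Finset.sum_add_distrib, Finset.sum_add_distrib, Finset.sum_const,
              Finset.card_univ, Fintype.card_fin, nsmul_eq_mul, sum_inner]
    have := mul_le_mul_of_nonneg_left hsumj (inv_nonneg.2 hm'.le)
    rw [real_inner_smul_left]
    have e2 : (m:ℝ)⁻¹ * ((m:ℝ) * (L / 2 * E t ^ 2)) = L / 2 * E t ^ 2 := by
      field_simp
    nlinarith [this]
  set c : ℝ := (γ + ρ) / 2 - 3 * L / 2 - L * δ * τ with hc
  -- key per-step decrease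
  have key : ∀ t, ((m : ℝ)⁻¹ * ∑ j, Lf j (x (t + 1)) + h (x (t + 1))) + c * E t ^ 2 ≤
      ((m : ℝ)⁻¹ * ∑ j, Lf j (x t) + h (x t)) + (L / δ) * S t := by
    intro t
    have h1 := hsub t (x t)
    simp only [sub_self, norm_zero] at h1
    have hrev : ‖x t - x (t + 1)‖ = E t := by simp only [hE]; rw [norm_sub_rev]
    rw [hrev] at h1
    have h1' : h (x (t + 1)) + ρ / 2 * E t ^ 2 + γ / 2 * E t ^ 2 ≤
        h (x t) + ⟪gradient (Lf j0) (x (t + 1)) + dv t, x t - x (t + 1)⟫ := by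
      have : ρ / 2 * ‖x (t + 1) - x t‖ ^ 2 = ρ / 2 * E t ^ 2 := by simp only [hE]
      rw [this] at h1
      linarith
    have h2 := hdesc t
    -- rewrite the two inner products as minus the error inner product
    set Ev := gradient (Lf j0) (x (t + 1)) + dv t - (m : ℝ)⁻¹ • ∑ j, gradient (Lf j) (x t)
      with hEv
    have h3 : ⟪(m : ℝ)⁻¹ • ∑ j, gradient (Lf j) (x t), x (t + 1) - x t⟫ +
        ⟪gradient (Lf j0) (x (t + 1)) + dv t, x t - x (t + 1)⟫ = - ⟪Ev, x (t + 1) - x t⟫ := by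
      rw [hEv, inner_sub_left]
      have : ⟪gradient (Lf j0) (x (t + 1)) + dv t, x t - x (t + 1)⟫ =
          - ⟪gradient (Lf j0) (x (t + 1)) + dv t, x (t + 1) - x t⟫ := by
        rw [← inner_neg_right]
        congr 1
        abel
      rw [this]
      ring
    have h4 : - ⟪Ev, x (t + 1) - x t⟫ ≤ ‖Ev‖ * E t := by
      have := real_inner_le_norm (-Ev) (x (t + 1) - x t)
      rw [inner_neg_left, norm_neg] at this
      calc - ⟪Ev, x (t + 1) - x t⟫ ≤ ‖Ev‖ * ‖x (t + 1) - x t‖ := this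
        _ = ‖Ev‖ * E t := by simp only [hE]
    have h5 : ‖Ev‖ * E t ≤ (L * E t + 2 * L * W t) * E t :=
      mul_le_mul_of_nonneg_right (hErr t) (hEnn t)
    have h6 : L * (2 * (W t * E t)) ≤ L * (δ * τ * E t ^ 2 + δ⁻¹ * S t) :=
      mul_le_mul_of_nonneg_left (hPP t) hL.le
    have h7 : (L * E t + 2 * L * W t) * E t = L * E t ^ 2 + L * (2 * (W t * E t)) := by ring
    have h8 : L / δ * S t = L * δ⁻¹ * S t := by rw [div_eq_mul_inv]
    rw [hc]
    nlinarith [h1', h2, h3, h4, h5, h6]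
  
  set κ : ℝ := c - L * τ / δ with hκdef
  have hκ : 0 < κ := by
    have hτnn : (0:ℝ) ≤ (τ:ℝ) := Nat.cast_nonneg τ
    have h2 : L * τ / δ < ρ / 2 := by
      rw [div_lt_iff₀ hδ] at hA2 ⊢
      linarith
    rw [hκdef, hc]
    have : L * δ * τ = L * δ * (τ:ℝ) := rfl
    linarith
  have hsum : ∀ T, κ * ∑ t ∈ Finset.range T, E t ^ 2 ≤
      ((m : ℝ)⁻¹ * ∑ j, Lf j (x 0) + h (x 0)) - Llo := by
    intro T
    have tele : ∑ t ∈ Finset.range T,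
        (((m : ℝ)⁻¹ * ∑ j, Lf j (x t) + h (x t)) - ((m : ℝ)⁻¹ * ∑ j, Lf j (x (t+1)) + h (x (t+1))))
        = ((m : ℝ)⁻¹ * ∑ j, Lf j (x 0) + h (x 0)) - ((m : ℝ)⁻¹ * ∑ j, Lf j (x T) + h (x T)) :=
      Finset.sum_range_sub' (fun t => (m : ℝ)⁻¹ * ∑ j, Lf j (x t) + h (x t)) T
    have hstep : ∀ t, c * E t ^ 2 - (L / δ) * S t ≤
        ((m : ℝ)⁻¹ * ∑ j, Lf j (x t) + h (x t)) -
          ((m : ℝ)⁻¹ * ∑ j, Lf j (x (t+1)) + h (x (t+1))) := by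
      intro t
      linarith [key t]
    have hsumstep : ∑ t ∈ Finset.range T, (c * E t ^ 2 - (L / δ) * S t) ≤
        ((m : ℝ)⁻¹ * ∑ j, Lf j (x 0) + h (x 0)) - ((m : ℝ)⁻¹ * ∑ j, Lf j (x T) + h (x T)) := by
      rw [← tele]
      exact Finset.sum_le_sum fun t _ => hstep t
    have hsplit : ∑ t ∈ Finset.range T, (c * E t ^ 2 - (L / δ) * S t)
        = c * ∑ t ∈ Finset.range T, E t ^ 2 - (L / δ) * ∑ t ∈ Finset.range T, S t := by
      rw [Finset.sum_sub_distrib, Finset.mul_sum, Finset.mul_sum]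
    have hSsum : ∑ t ∈ Finset.range T, S t ≤ (τ : ℝ) * ∑ t ∈ Finset.range T, E t ^ 2 := by
      have := sum_window_le (τ := τ) (fun s => E s ^ 2) (fun s => sq_nonneg _) T
      simp only [hS]
      exact this
    have hS2 : (L / δ) * ∑ t ∈ Finset.range T, S t ≤
        (L / δ) * ((τ : ℝ) * ∑ t ∈ Finset.range T, E t ^ 2) :=
      mul_le_mul_of_nonneg_left hSsum (by positivity)
    have hlo := hLlo (x T)
    have e1 : κ * ∑ t ∈ Finset.range T, E t ^ 2 =
        c * ∑ t ∈ Finset.range T, E t ^ 2 - L * τ / δ * ∑ t ∈ Finset.range T, E t ^ 2 := by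
      rw [hκdef]; ring
    have e2 : (L / δ) * ((τ : ℝ) * ∑ t ∈ Finset.range T, E t ^ 2)
        = L * τ / δ * ∑ t ∈ Finset.range T, E t ^ 2 := by ring
    linarith
  have hE0 : Filter.Tendsto E Filter.atTop (nhds 0) := by
    have hsummable : Summable (fun t => E t ^ 2) := by
      apply summable_of_sum_range_le (fun n => sq_nonneg _)
      intro n
      have hdiv : ∑ t ∈ Finset.range n, E t ^ 2 ≤
          (((m : ℝ)⁻¹ * ∑ j, Lf j (x 0) + h (x 0)) - Llo) / κ := by
        rw [le_div_iff₀ hκ]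
        calc (∑ t ∈ Finset.range n, E t ^ 2) * κ = κ * ∑ t ∈ Finset.range n, E t ^ 2 := by ring
          _ ≤ _ := hsum n
      exact hdiv
    have ht2 := hsummable.tendsto_atTop_zero
    have hsq : (fun t => Real.sqrt (E t ^ 2)) = E :=
      funext fun t => Real.sqrt_sq (hEnn t)
    have := (Real.continuous_sqrt.tendsto 0).comp ht2
    rw [show Real.sqrt 0 = 0 from Real.sqrt_zero] at this
    rw [← hsq]
    exact this
  
  -- summability and convergence of E and W to 0
  have hW0 : Filter.Tendsto W Filter.atTop (nhds 0) := by
    have hshift : ∀ k : ℕ, Filter.Tendsto (fun t => E (t - τ + k)) Filter.atTop (nhds 0) :=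
      fun k => hE0.comp ((Filter.tendsto_add_atTop_nat k).comp (Filter.tendsto_sub_atTop_nat τ))
    have hsumlim : Filter.Tendsto (fun t => ∑ k ∈ Finset.range τ, E (t - τ + k))
        Filter.atTop (nhds 0) := by
      have := tendsto_finset_sum (Finset.range τ) (fun k _ => hshift k)
      simpa using this
    apply hsumlim.congr'
    filter_upwards [Filter.eventually_ge_atTop τ] with t ht
    show ∑ k ∈ Finset.range τ, E (t - τ + k) = ∑ s ∈ Finset.Ico (t - τ) t, E s
    rw [Finset.sum_Ico_eq_sum_range]
    have hττ : t - (t - τ) = τ := by omega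
    rw [hττ]
  -- bound on the prox-gradient residual
  have hq : ∀ t, ‖x t - prox (x t - (m : ℝ)⁻¹ • (∑ j, gradient (Lf j) (x t)))‖ ≤
      (1 + |1 - ρ| + L) * E t + 2 * L * W t := by
    intro t
    have h1 := hfix t
    have h2 := prox_nonexpansive h hconv prox hprox
      (x (t + 1) - (gradient (Lf j0) (x (t + 1)) + dv t + ρ • (x (t + 1) - x t)))
      (x t - (m : ℝ)⁻¹ • (∑ j, gradient (Lf j) (x t)))
    rw [← h1] at h2
    have e3 : x (t + 1) - (gradient (Lf j0) (x (t + 1)) + dv t + ρ • (x (t + 1) - x t)) -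
        (x t - (m : ℝ)⁻¹ • (∑ j, gradient (Lf j) (x t)))
        = ((1 - ρ) • (x (t + 1) - x t)) -
          (gradient (Lf j0) (x (t + 1)) + dv t - (m : ℝ)⁻¹ • ∑ j, gradient (Lf j) (x t)) := by
      rw [sub_smul, one_smul, smul_sub]
      abel
    rw [e3] at h2
    have h3 : ‖((1 - ρ) • (x (t + 1) - x t)) -
        (gradient (Lf j0) (x (t + 1)) + dv t - (m : ℝ)⁻¹ • ∑ j, gradient (Lf j) (x t))‖
        ≤ |1 - ρ| * E t + (L * E t + 2 * L * W t) := by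
      calc _ ≤ ‖(1 - ρ) • (x (t + 1) - x t)‖ +
            ‖gradient (Lf j0) (x (t + 1)) + dv t - (m : ℝ)⁻¹ • ∑ j, gradient (Lf j) (x t)‖ :=
            norm_sub_le _ _
        _ ≤ |1 - ρ| * E t + (L * E t + 2 * L * W t) := by
            apply add_le_add _ (hErr t)
            rw [norm_smul, Real.norm_eq_abs]
    have h4 : x t - prox (x t - (m : ℝ)⁻¹ • (∑ j, gradient (Lf j) (x t)))
        = (x t - x (t + 1)) +
          (x (t + 1) - prox (x t - (m : ℝ)⁻¹ • (∑ j, gradient (Lf j) (x t)))) := by abel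
    rw [h4]
    calc _ ≤ ‖x t - x (t + 1)‖ +
          ‖x (t + 1) - prox (x t - (m : ℝ)⁻¹ • (∑ j, gradient (Lf j) (x t)))‖ := norm_add_le _ _
      _ ≤ E t + (|1 - ρ| * E t + (L * E t + 2 * L * W t)) := by
          apply add_le_add
          · rw [norm_sub_rev]
          · exact le_trans h2 h3
      _ = (1 + |1 - ρ| + L) * E t + 2 * L * W t := by ring
  have part1 : Filter.Tendsto
      (fun t => ‖(x t - prox (x t - (m : ℝ)⁻¹ • (∑ j, gradient (Lf j) (x t))))‖)
      Filter.atTop (nhds 0) := by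
    have hb : Filter.Tendsto (fun t => (1 + |1 - ρ| + L) * E t + 2 * L * W t)
        Filter.atTop (nhds 0) := by
      have := (hE0.const_mul (1 + |1 - ρ| + L)).add (hW0.const_mul (2 * L))
      simpa using this
    exact squeeze_zero (fun t => norm_nonneg _) hq hb
  refine ⟨part1, ?_⟩
  rintro xhat ⟨φ, hφ, hxφ⟩
  have hgradcont : ∀ j : Fin m, Continuous (gradient (Lf j)) := by
    intro j
    have hlw : LipschitzWith (Real.toNNReal L) (gradient (Lf j)) := by
      apply LipschitzWith.of_dist_le_mul
      intro a b
      rw [dist_eq_norm, dist_eq_norm]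
      calc ‖gradient (Lf j) a - gradient (Lf j) b‖ ≤ L * ‖a - b‖ := hlip j a b
        _ = (Real.toNNReal L : ℝ) * ‖a - b‖ := by rw [Real.coe_toNNReal L hL.le]
    exact hlw.continuous
  have hproxcont : Continuous prox := by
    have hlw : LipschitzWith 1 prox := by
      apply LipschitzWith.of_dist_le_mul
      intro a b
      rw [dist_eq_norm, dist_eq_norm]
      simpa using prox_nonexpansive h hconv prox hprox a b
    exact hlw.continuous
  have hFcont : Continuous
      (fun y : EuclideanSpace ℝ (Fin p) =>
        ‖y - prox (y - (m : ℝ)⁻¹ • (∑ j, gradient (Lf j) y))‖) := by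
    apply Continuous.norm
    apply Continuous.sub continuous_id
    apply hproxcont.comp
    apply Continuous.sub continuous_id
    exact (continuous_const (y := ((m : ℝ)⁻¹))).smul (continuous_finset_sum _ (fun j _ => hgradcont j))
  have h1 : Filter.Tendsto
      (fun n => ‖x (φ n) - prox (x (φ n) - (m : ℝ)⁻¹ • (∑ j, gradient (Lf j) (x (φ n))))‖)
      Filter.atTop (nhds (‖xhat - prox (xhat - (m : ℝ)⁻¹ • (∑ j, gradient (Lf j) xhat))‖)) :=
    (hFcont.tendsto xhat).comp hxφ
  have h2 : Filter.Tendsto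
      (fun n => ‖x (φ n) - prox (x (φ n) - (m : ℝ)⁻¹ • (∑ j, gradient (Lf j) (x (φ n))))‖)
      Filter.atTop (nhds 0) := part1.comp hφ.tendsto_atTop
  have h0 : ‖xhat - prox (xhat - (m : ℝ)⁻¹ • (∑ j, gradient (Lf j) xhat))‖ = 0 :=
    tendsto_nhds_unique h1 h2
  have := norm_eq_zero.1 h0
  exact sub_eq_zero.1 this
end

section
/- For every T ≥ 0, the cumulative squared proximal gradients along the iterates are bounded by the cumulative squared iterate gaps: Σ_{t=0}^{T} ‖∇̃𝓛(x^t)‖² ≤ (2(2 + ρ)² + 8L²(τ + 1)²) Σ_{t=0}^{T} ‖Δ^{(t)}‖². -/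
open scoped RealInnerProductSpace

private lemma aux_pos_limit {c K : ℝ} (h : ∀ lam ∈ Set.Ioc (0:ℝ) 1, 0 ≤ c + lam * K) : 0 ≤ c := by
  by_contra hc
  push_neg at hc
  rcases le_or_gt K 0 with hK | hK
  · have := h 1 ⟨one_pos, le_refl 1⟩; linarith
  · have hl : min 1 (-c/(2*K)) ∈ Set.Ioc (0:ℝ) 1 :=
      ⟨lt_min one_pos (div_pos (by linarith) (by linarith)), min_le_left _ _⟩
    have h2 := h _ hl
    have h3 : min 1 (-c/(2*K)) * K ≤ (-c/(2*K)) * K :=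
      mul_le_mul_of_nonneg_right (min_le_right _ _) hK.le
    have h4 : (-c/(2*K)) * K = -c/2 := by field_simp
    linarith

private lemma aux_deriv_limit {F : ℝ → ℝ} {D c K : ℝ} (hF : HasDerivAt F D 0)
    (hineq : ∀ lam ∈ Set.Ioc (0:ℝ) 1, lam * (D - c) - lam^2 * K ≤ F lam - F 0) : 0 ≤ c := by
  have hslope : Filter.Tendsto (slope F 0) (nhdsWithin 0 (Set.Ioi 0)) (nhds D) :=
    (hasDerivAt_iff_tendsto_slope.1 hF).mono_left
      (nhdsWithin_mono _ (fun y hy => by simpa using (ne_of_gt hy)))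
  have hlin : Filter.Tendsto (fun lam : ℝ => (D - c) - lam * K) (nhdsWithin 0 (Set.Ioi 0))
      (nhds (D - c)) := by
    have h1 : Filter.Tendsto (fun lam : ℝ => (D - c) - lam * K) (nhds 0)
        (nhds ((D - c) - 0 * K)) :=
      tendsto_const_nhds.sub ((continuous_id.mul continuous_const).tendsto 0)
    simpa using h1.mono_left nhdsWithin_le_nhds
  have hev : ∀ᶠ lam in nhdsWithin 0 (Set.Ioi 0), (D - c) - lam * K ≤ slope F 0 lam := by
    filter_upwards [Ioc_mem_nhdsGT_of_mem ⟨le_refl (0:ℝ), one_pos⟩] with lam hlam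
    have h1 := hineq lam hlam
    rw [slope_def_field, sub_zero, le_div_iff₀ hlam.1]
    nlinarith [hlam.1]
  have := le_of_tendsto_of_tendsto hlin hslope hev
  linarith

private lemma aux_prox_vi {E : Type*} [NormedAddCommGroup E] [InnerProductSpace ℝ E]
    (h : E → ℝ) (hconv : ConvexOn ℝ Set.univ h)
    (prox : E → E) (hprox : ∀ z y, h (prox z) + 1/2*‖prox z - z‖^2 ≤ h y + 1/2*‖y - z‖^2)
    (z w : E) : 0 ≤ h w - h (prox z) + ⟪prox z - z, w - prox z⟫ := by
  set q := prox z with hq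
  have key : ∀ lam ∈ Set.Ioc (0:ℝ) 1, 0 ≤ (h w - h q + ⟪q - z, w - q⟫) + lam * (‖w - q‖^2/2) := by
    intro lam hlam
    have h1 := hprox z (q + lam • (w - q))
    rw [← hq] at h1
    have hcomb : h (q + lam • (w - q)) ≤ (1 - lam) * h q + lam * h w := by
      have h2 := hconv.2 (Set.mem_univ q) (Set.mem_univ w)
        (by linarith [hlam.2] : (0:ℝ) ≤ 1 - lam) (le_of_lt hlam.1) (by ring)
      calc h (q + lam • (w - q)) = h ((1-lam) • q + lam • w) := by congr 1; module
      _ ≤ _ := h2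
    have hnorm : ‖q + lam • (w - q) - z‖^2
        = ‖q - z‖^2 + 2*lam*⟪q - z, w - q⟫ + lam^2 * ‖w - q‖^2 := by
      have h3 : q + lam • (w - q) - z = (q - z) + lam • (w - q) := by module
      rw [h3, norm_add_sq_real, real_inner_smul_right, norm_smul]
      simp only [Real.norm_eq_abs, mul_pow, sq_abs]
      ring
    have h5 : 0 ≤ lam * ((h w - h q + ⟪q - z, w - q⟫) + lam * (‖w - q‖^2/2)) := by nlinarith
    exact (mul_nonneg_iff_of_pos_left hlam.1).1 h5
  exact aux_pos_limit key

private lemma aux_prox_nonexp {E : Type*} [NormedAddCommGroup E] [InnerProductSpace ℝ E]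
    (h : E → ℝ) (hconv : ConvexOn ℝ Set.univ h)
    (prox : E → E) (hprox : ∀ z y, h (prox z) + 1/2*‖prox z - z‖^2 ≤ h y + 1/2*‖y - z‖^2)
    (z1 z2 : E) : ‖prox z1 - prox z2‖ ≤ ‖z1 - z2‖ := by
  have e1 := aux_prox_vi h hconv prox hprox z1 (prox z2)
  have e2 := aux_prox_vi h hconv prox hprox z2 (prox z1)
  have hadd : 0 ≤ ⟪prox z1 - z1, prox z2 - prox z1⟫ + ⟪prox z2 - z2, prox z1 - prox z2⟫ := by
    linarith
  have h1 : ⟪prox z2 - z2, prox z1 - prox z2⟫ = -⟪prox z2 - z2, prox z2 - prox z1⟫ := by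
    rw [← inner_neg_right]; congr 1; abel
  rw [h1, ← sub_eq_add_neg, ← inner_sub_left] at hadd
  have h2 : prox z1 - z1 - (prox z2 - z2) = (z2 - z1) - (prox z2 - prox z1) := by abel
  rw [h2, inner_sub_left, real_inner_self_eq_norm_sq] at hadd
  have h3 : ⟪z2 - z1, prox z2 - prox z1⟫ ≤ ‖z2 - z1‖ * ‖prox z2 - prox z1‖ :=
    real_inner_le_norm _ _
  have h4 : ‖prox z2 - prox z1‖^2 ≤ ‖z2 - z1‖ * ‖prox z2 - prox z1‖ := by linarith
  have h5 : ‖prox z1 - prox z2‖ = ‖prox z2 - prox z1‖ := norm_sub_rev _ _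
  have h6 : ‖z1 - z2‖ = ‖z2 - z1‖ := norm_sub_rev _ _
  rcases eq_or_lt_of_le (norm_nonneg (prox z2 - prox z1)) with h7 | h7
  · rw [h5, ← h7, h6]; exact norm_nonneg _
  · rw [h5, h6]; nlinarith

private lemma aux_telescope {E : Type*} [NormedAddCommGroup E]
    (x : ℕ → E) (a b : ℕ) (hab : a ≤ b) :
    x b - x a = ∑ s ∈ Finset.Ico a b, (x (s+1) - x s) := by
  rw [Finset.sum_Ico_eq_sub _ hab, Finset.sum_range_sub, Finset.sum_range_sub]
  abel

private lemma aux_swap (τ T : ℕ) (a : ℕ → ℝ) (ha : ∀ s, 0 ≤ a s) :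
    ∑ t ∈ Finset.range (T+1), ∑ s ∈ Finset.Ico (t - τ) (t+1), a s
      ≤ ((τ:ℝ) + 1) * ∑ s ∈ Finset.range (T+1), a s := by
  have h1 : ∀ t ∈ Finset.range (T+1), ∑ s ∈ Finset.Ico (t - τ) (t+1), a s
      = ∑ s ∈ Finset.range (T+1), if s ∈ Finset.Ico (t - τ) (t+1) then a s else 0 := by
    intro t ht
    rw [Finset.sum_ite_mem, Finset.inter_eq_right.2]
    intro s hs
    simp only [Finset.mem_Ico] at hs
    simp only [Finset.mem_range] at ht ⊢
    omega
  rw [Finset.sum_congr rfl h1, Finset.sum_comm, Finset.mul_sum]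
  apply Finset.sum_le_sum
  intro s _
  have h2 : ∀ t ∈ Finset.range (T+1), (if s ∈ Finset.Ico (t - τ) (t+1) then a s else 0)
      ≤ (if t ∈ Finset.Icc s (s+τ) then a s else 0) := by
    intro t _
    by_cases hc : s ∈ Finset.Ico (t - τ) (t+1)
    · have hm : t ∈ Finset.Icc s (s+τ) := by
        simp only [Finset.mem_Ico] at hc; simp only [Finset.mem_Icc]; omega
      simp [hc, hm]
    · simp only [hc, if_false]
      split <;> simp [ha s]
  calc ∑ t ∈ Finset.range (T+1), (if s ∈ Finset.Ico (t - τ) (t+1) then a s else 0)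
      ≤ ∑ t ∈ Finset.range (T+1), (if t ∈ Finset.Icc s (s+τ) then a s else 0) :=
        Finset.sum_le_sum h2
    _ = ∑ t ∈ Finset.range (T+1) ∩ Finset.Icc s (s+τ), a s := Finset.sum_ite_mem _ _ _
    _ = ((Finset.range (T+1) ∩ Finset.Icc s (s+τ)).card : ℝ) * a s := by
        rw [Finset.sum_const, nsmul_eq_mul]
    _ ≤ ((τ:ℝ) + 1) * a s := by
        apply mul_le_mul_of_nonneg_right _ (ha s)
        have hcard := Finset.card_le_card
          (Finset.inter_subset_right (s₁ := Finset.range (T+1)) (s₂ := Finset.Icc s (s+τ)))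
        have hc : (Finset.Icc s (s+τ)).card = τ + 1 := by rw [Nat.card_Icc]; omega
        calc ((Finset.range (T+1) ∩ Finset.Icc s (s+τ)).card : ℝ)
            ≤ ((Finset.Icc s (s+τ)).card : ℝ) := by exact_mod_cast hcard
          _ = (τ:ℝ) + 1 := by rw [hc]; push_cast; ring
set_option maxHeartbeats 2000000 in
theorem stmt_10
    {p m τ : ℕ} (hp : 1 ≤ p) (hm : 0 < m)
    {L ρ : ℝ}
    (hL : 0 < L) (hρ : 0 < ρ)
    (Lf : Fin m → EuclideanSpace ℝ (Fin p) → ℝ)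
    (hdiff : ∀ j, Differentiable ℝ (Lf j))
    (hlip : ∀ j (u v : EuclideanSpace ℝ (Fin p)), ‖gradient (Lf j) u - gradient (Lf j) v‖ ≤ L * ‖u - v‖)
    (h : EuclideanSpace ℝ (Fin p) → ℝ)
    (hconv : ConvexOn ℝ Set.univ h)
    (tj : ℕ → Fin m → ℕ)
    (htj : ∀ t j, t - τ ≤ tj t j ∧ tj t j ≤ t)
    (x : ℕ → EuclideanSpace ℝ (Fin p))
    (hupdate : ∀ t, ∀ y : EuclideanSpace ℝ (Fin p),
      Lf ⟨0, hm⟩ (x (t + 1)) + h (x (t + 1)) + ρ / 2 * ‖x (t + 1) - x t‖ ^ 2 +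
          ⟪((m : ℝ)⁻¹ • ∑ j, gradient (Lf j) (x (tj t j))) - gradient (Lf ⟨0, hm⟩) (x (tj t ⟨0, hm⟩)), x (t + 1) - x t⟫ ≤
        Lf ⟨0, hm⟩ y + h y + ρ / 2 * ‖y - x t‖ ^ 2 +
          ⟪((m : ℝ)⁻¹ • ∑ j, gradient (Lf j) (x (tj t j))) - gradient (Lf ⟨0, hm⟩) (x (tj t ⟨0, hm⟩)), y - x t⟫)
    (Δ : ℤ → EuclideanSpace ℝ (Fin p))
    (hΔ : ∀ s : ℤ, 0 ≤ s → Δ s = x (s.toNat + 1) - x s.toNat)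
    (hΔneg : ∀ s : ℤ, s < 0 → Δ s = 0)
    (prox : EuclideanSpace ℝ (Fin p) → EuclideanSpace ℝ (Fin p))
    (hprox : ∀ z y, h (prox z) + 1 / 2 * ‖prox z - z‖ ^ 2 ≤ h y + 1 / 2 * ‖y - z‖ ^ 2)
    (hproxuniq : ∀ z y, (∀ w, h y + 1 / 2 * ‖y - z‖ ^ 2 ≤ h w + 1 / 2 * ‖w - z‖ ^ 2) → y = prox z)
    (T : ℕ)
    :
    ∑ t ∈ Finset.range (T + 1), ‖(x t - prox (x t - (m : ℝ)⁻¹ • (∑ j, gradient (Lf j) (x t))))‖ ^ 2 ≤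
      (2 * (2 + ρ) ^ 2 + 8 * L ^ 2 * ((τ : ℝ) + 1) ^ 2) *
        ∑ t ∈ Finset.range (T + 1), ‖Δ (t : ℤ)‖ ^ 2 := by
  have hΔnat : ∀ s : ℕ, Δ (s : ℤ) = x (s + 1) - x s := by
    intro s
    have h1 := hΔ (s : ℤ) (by exact_mod_cast Nat.zero_le s)
    simpa using h1
  set e : Fin m := ⟨0, hm⟩ with he
  -- Step 1: optimality characterization of the update
  have key : ∀ t : ℕ, x (t+1) =
      prox (x (t+1) - (gradient (Lf e) (x (t+1)) + ρ • (x (t+1) - x t) +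
        (((m : ℝ)⁻¹ • ∑ j, gradient (Lf j) (x (tj t j))) - gradient (Lf e) (x (tj t e))))) := by
    intro t
    set vt := ((m : ℝ)⁻¹ • ∑ j, gradient (Lf j) (x (tj t j))) - gradient (Lf e) (x (tj t e))
      with hvt
    set ut := gradient (Lf e) (x (t+1)) + ρ • (x (t+1) - x t) + vt with hut
    apply hproxuniq
    intro w
    have claim : 0 ≤ h w - h (x (t+1)) + ⟪ut, w - x (t+1)⟫ := by
      apply aux_deriv_limit (F := fun lam : ℝ => Lf e (x (t+1) + lam • (w - x (t+1))))
        (D := ⟪gradient (Lf e) (x (t+1)), w - x (t+1)⟫) (K := ρ/2 * ‖w - x (t+1)‖^2)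
      · have h1 : HasDerivAt (fun lam : ℝ => x (t+1) + lam • (w - x (t+1))) (w - x (t+1)) 0 := by
          simpa using ((hasDerivAt_id (0:ℝ)).smul_const (w - x (t+1))).const_add (x (t+1))
        have h2 := ((hdiff e) (x (t+1))).hasGradientAt.hasFDerivAt
        rw [show x (t+1) = x (t+1) + (0:ℝ) • (w - x (t+1)) by simp] at h2
        have h3 := h2.comp_hasDerivAt 0 h1
        simpa [InnerProductSpace.toDual_apply_apply, Function.comp_def] using h3
      · intro lam hlam
        have hup := hupdate t (x (t+1) + lam • (w - x (t+1)))
        rw [← hvt] at hup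
        have hA : x (t+1) + lam • (w - x (t+1)) - x t
            = (x (t+1) - x t) + lam • (w - x (t+1)) := by module
        have hnorm : ‖x (t+1) + lam • (w - x (t+1)) - x t‖^2
            = ‖x (t+1) - x t‖^2 + 2*lam*⟪x (t+1) - x t, w - x (t+1)⟫
              + lam^2*‖w - x (t+1)‖^2 := by
          rw [hA, norm_add_sq_real, real_inner_smul_right, norm_smul]
          simp only [Real.norm_eq_abs, mul_pow, sq_abs]
          ring
        have hinner : ⟪vt, x (t+1) + lam • (w - x (t+1)) - x t⟫
            = ⟪vt, x (t+1) - x t⟫ + lam * ⟪vt, w - x (t+1)⟫ := by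
          rw [hA, inner_add_right, real_inner_smul_right]
        have hcv : h (x (t+1) + lam • (w - x (t+1))) ≤ (1-lam) * h (x (t+1)) + lam * h w := by
          have h2 := hconv.2 (Set.mem_univ (x (t+1))) (Set.mem_univ w)
            (by linarith [hlam.2] : (0:ℝ) ≤ 1 - lam) (le_of_lt hlam.1) (by ring)
          calc h (x (t+1) + lam • (w - x (t+1))) = h ((1-lam) • x (t+1) + lam • w) := by
                congr 1; module
            _ ≤ _ := h2
        have hu : ⟪ut, w - x (t+1)⟫ = ⟪gradient (Lf e) (x (t+1)), w - x (t+1)⟫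
            + ρ * ⟪x (t+1) - x t, w - x (t+1)⟫ + ⟪vt, w - x (t+1)⟫ := by
          rw [hut, inner_add_left, inner_add_left, real_inner_smul_left]
        rw [hnorm, hinner] at hup
        simp only [zero_smul, add_zero]
        rw [hu]
        nlinarith [hup, hcv]
    have hxz : x (t+1) - (x (t+1) - ut) = ut := by abel
    have hdecomp : w - (x (t+1) - ut) = (w - x (t+1)) + ut := by abel
    have hnorm2 : ‖w - (x (t+1) - ut)‖^2
        = ‖w - x (t+1)‖^2 + 2*⟪w - x (t+1), ut⟫ + ‖ut‖^2 := by
      rw [hdecomp, norm_add_sq_real]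
    rw [hxz, hnorm2]
    have hcomm : ⟪w - x (t+1), ut⟫ = ⟪ut, w - x (t+1)⟫ := real_inner_comm _ _
    nlinarith [claim, sq_nonneg ‖w - x (t+1)‖]
  -- Step 2: telescoping bounds
  have hxd : ∀ a b : ℕ, a ≤ b → ‖x b - x a‖ ≤ ∑ s ∈ Finset.Ico a b, ‖Δ (s : ℤ)‖ := by
    intro a b hab
    rw [aux_telescope x a b hab]
    refine le_trans (norm_sum_le _ _) (le_of_eq ?_)
    refine Finset.sum_congr rfl (fun s _ => ?_)
    rw [hΔnat s]
  have hmono : ∀ t a b : ℕ, t - τ ≤ a → b ≤ t+1 →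
      (∑ s ∈ Finset.Ico a b, ‖Δ (s : ℤ)‖) ≤ ∑ s ∈ Finset.Ico (t-τ) (t+1), ‖Δ (s : ℤ)‖ := by
    intro t a b h1 h2
    exact Finset.sum_le_sum_of_subset_of_nonneg (Finset.Ico_subset_Ico h1 h2)
      (fun s _ _ => norm_nonneg _)
  -- Step 3: per-iteration bound
  have hstep : ∀ t : ℕ, ‖x t - prox (x t - (m : ℝ)⁻¹ • (∑ j, gradient (Lf j) (x t)))‖
      ≤ (2+ρ) * ‖Δ (t : ℤ)‖ + 2*L*(∑ s ∈ Finset.Ico (t-τ) (t+1), ‖Δ (s : ℤ)‖) := by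
    intro t
    have hm' : (m : ℝ) ≠ 0 := Nat.cast_ne_zero.2 hm.ne'
    set S := ∑ s ∈ Finset.Ico (t-τ) (t+1), ‖Δ (s : ℤ)‖ with hS
    set zb := x t - (m : ℝ)⁻¹ • (∑ j, gradient (Lf j) (x t)) with hzb
    set vt := ((m : ℝ)⁻¹ • ∑ j, gradient (Lf j) (x (tj t j))) - gradient (Lf e) (x (tj t e))
      with hvt
    set ut := gradient (Lf e) (x (t+1)) + ρ • (x (t+1) - x t) + vt with hut
    set zt := x (t+1) - ut with hzt
    have hk : x (t+1) = prox zt := key t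
    have hsplit : x t - prox zb = (x t - x (t+1)) + (prox zt - prox zb) := by
      rw [← hk]; abel
    have hid : zt - zb = (x (t+1) - x t) - ρ • (x (t+1) - x t)
        - (gradient (Lf e) (x (t+1)) - gradient (Lf e) (x (tj t e)))
        - (m : ℝ)⁻¹ • (∑ j, (gradient (Lf j) (x (tj t j)) - gradient (Lf j) (x t))) := by
      rw [hzt, hut, hvt, hzb, Finset.sum_sub_distrib]
      module
    have hB1 : ‖gradient (Lf e) (x (t+1)) - gradient (Lf e) (x (tj t e))‖ ≤ L * S := by
      refine le_trans (hlip e _ _) (mul_le_mul_of_nonneg_left ?_ hL.le)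
      refine le_trans (hxd (tj t e) (t+1) (le_trans (htj t e).2 (Nat.le_succ t))) ?_
      exact hmono t _ _ (htj t e).1 (le_refl _)
    have hB2 : ‖(m : ℝ)⁻¹ • (∑ j, (gradient (Lf j) (x (tj t j)) - gradient (Lf j) (x t)))‖
        ≤ L * S := by
      rw [norm_smul]
      have h1 : ‖∑ j, (gradient (Lf j) (x (tj t j)) - gradient (Lf j) (x t))‖
          ≤ ∑ j : Fin m, (L * S) := by
        refine le_trans (norm_sum_le _ _) (Finset.sum_le_sum (fun j _ => ?_))
        refine le_trans (hlip j _ _) (mul_le_mul_of_nonneg_left ?_ hL.le)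
        rw [norm_sub_rev]
        refine le_trans (hxd (tj t j) t (htj t j).2) ?_
        exact hmono t _ _ (htj t j).1 (Nat.le_succ t)
      have h2 : ∑ j : Fin m, (L * S) = (m : ℝ) * (L * S) := by
        rw [Finset.sum_const, Finset.card_univ, Fintype.card_fin, nsmul_eq_mul]
      have h3 : ‖(m : ℝ)⁻¹‖ = (m : ℝ)⁻¹ := by
        rw [Real.norm_eq_abs, abs_of_nonneg (by positivity)]
      rw [h3]
      calc (m : ℝ)⁻¹ * ‖∑ j, (gradient (Lf j) (x (tj t j)) - gradient (Lf j) (x t))‖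
          ≤ (m : ℝ)⁻¹ * ((m : ℝ) * (L * S)) := by
            rw [← h2]
            exact mul_le_mul_of_nonneg_left h1 (by positivity)
        _ = L * S := by field_simp
    have hΔt : ‖x (t+1) - x t‖ = ‖Δ (t : ℤ)‖ := by rw [hΔnat t]
    have hzz : ‖zt - zb‖ ≤ (1+ρ) * ‖Δ (t : ℤ)‖ + 2 * L * S := by
      rw [hid]
      calc ‖(x (t+1) - x t) - ρ • (x (t+1) - x t)
            - (gradient (Lf e) (x (t+1)) - gradient (Lf e) (x (tj t e)))
            - (m : ℝ)⁻¹ • (∑ j, (gradient (Lf j) (x (tj t j)) - gradient (Lf j) (x t)))‖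
          ≤ ‖(x (t+1) - x t) - ρ • (x (t+1) - x t)
              - (gradient (Lf e) (x (t+1)) - gradient (Lf e) (x (tj t e)))‖
            + ‖(m : ℝ)⁻¹ • (∑ j, (gradient (Lf j) (x (tj t j)) - gradient (Lf j) (x t)))‖ :=
            norm_sub_le _ _
        _ ≤ (‖(x (t+1) - x t) - ρ • (x (t+1) - x t)‖
              + ‖gradient (Lf e) (x (t+1)) - gradient (Lf e) (x (tj t e))‖)
            + ‖(m : ℝ)⁻¹ • (∑ j, (gradient (Lf j) (x (tj t j)) - gradient (Lf j) (x t)))‖ := by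
            gcongr
            exact norm_sub_le _ _
        _ ≤ ((‖x (t+1) - x t‖ + ρ * ‖x (t+1) - x t‖) + L * S) + L * S := by
            have ha : ‖(x (t+1) - x t) - ρ • (x (t+1) - x t)‖
                ≤ ‖x (t+1) - x t‖ + ρ * ‖x (t+1) - x t‖ := by
              refine le_trans (norm_sub_le _ _) (le_of_eq ?_)
              rw [norm_smul, Real.norm_eq_abs, abs_of_nonneg hρ.le]
            exact add_le_add (add_le_add ha hB1) hB2
        _ = (1+ρ) * ‖Δ (t : ℤ)‖ + 2 * L * S := by rw [hΔt]; ring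
    calc ‖x t - prox zb‖ = ‖(x t - x (t+1)) + (prox zt - prox zb)‖ := by rw [hsplit]
      _ ≤ ‖x t - x (t+1)‖ + ‖prox zt - prox zb‖ := norm_add_le _ _
      _ ≤ ‖x t - x (t+1)‖ + ‖zt - zb‖ := by
          gcongr
          exact aux_prox_nonexp h hconv prox hprox zt zb
      _ ≤ ‖Δ (t : ℤ)‖ + ((1+ρ) * ‖Δ (t : ℤ)‖ + 2 * L * S) := by
          gcongr
          rw [norm_sub_rev, hΔt]
      _ = (2+ρ) * ‖Δ (t : ℤ)‖ + 2*L*S := by ring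
  -- Step 4: squared bound
  have hsq : ∀ t : ℕ, ‖x t - prox (x t - (m : ℝ)⁻¹ • (∑ j, gradient (Lf j) (x t)))‖^2
      ≤ 2*(2+ρ)^2*‖Δ (t : ℤ)‖^2
        + (8*L^2*((τ:ℝ)+1)) * (∑ s ∈ Finset.Ico (t-τ) (t+1), ‖Δ (s : ℤ)‖^2) := by
    intro t
    have h1 := hstep t
    have h2 : ‖x t - prox (x t - (m : ℝ)⁻¹ • (∑ j, gradient (Lf j) (x t)))‖^2
        ≤ ((2+ρ) * ‖Δ (t : ℤ)‖ + 2*L*(∑ s ∈ Finset.Ico (t-τ) (t+1), ‖Δ (s : ℤ)‖))^2 :=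
      pow_le_pow_left₀ (norm_nonneg _) h1 2
    have h3 : (∑ s ∈ Finset.Ico (t-τ) (t+1), ‖Δ (s : ℤ)‖)^2
        ≤ ((Finset.Ico (t-τ) (t+1)).card : ℝ) * ∑ s ∈ Finset.Ico (t-τ) (t+1), ‖Δ (s : ℤ)‖^2 :=
      sq_sum_le_card_mul_sum_sq
    have hcard : ((Finset.Ico (t-τ) (t+1)).card : ℝ) ≤ (τ:ℝ)+1 := by
      rw [Nat.card_Ico]
      have hn : t + 1 - (t - τ) ≤ τ + 1 := by omega
      calc ((t + 1 - (t - τ) : ℕ) : ℝ) ≤ ((τ + 1 : ℕ) : ℝ) := Nat.cast_le.2 hn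
        _ = (τ:ℝ)+1 := by push_cast; ring
    have hQ0 : (0:ℝ) ≤ ∑ s ∈ Finset.Ico (t-τ) (t+1), ‖Δ (s : ℤ)‖^2 :=
      Finset.sum_nonneg (fun s _ => sq_nonneg _)
    have h4 : (∑ s ∈ Finset.Ico (t-τ) (t+1), ‖Δ (s : ℤ)‖)^2
        ≤ ((τ:ℝ)+1) * ∑ s ∈ Finset.Ico (t-τ) (t+1), ‖Δ (s : ℤ)‖^2 :=
      le_trans h3 (mul_le_mul_of_nonneg_right hcard hQ0)
    nlinarith [h2, mul_le_mul_of_nonneg_left h4 (show (0:ℝ) ≤ 8*L^2 by positivity),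
      sq_nonneg ((2+ρ)*‖Δ (t : ℤ)‖ - 2*L*(∑ s ∈ Finset.Ico (t-τ) (t+1), ‖Δ (s : ℤ)‖))]
  -- Step 5: sum up
  calc ∑ t ∈ Finset.range (T + 1),
        ‖(x t - prox (x t - (m : ℝ)⁻¹ • (∑ j, gradient (Lf j) (x t))))‖ ^ 2
      ≤ ∑ t ∈ Finset.range (T + 1), (2*(2+ρ)^2*‖Δ (t : ℤ)‖^2
          + (8*L^2*((τ:ℝ)+1)) * (∑ s ∈ Finset.Ico (t-τ) (t+1), ‖Δ (s : ℤ)‖^2)) :=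
        Finset.sum_le_sum (fun t _ => hsq t)
    _ = 2*(2+ρ)^2 * (∑ t ∈ Finset.range (T + 1), ‖Δ (t : ℤ)‖^2)
        + (8*L^2*((τ:ℝ)+1)) * ∑ t ∈ Finset.range (T + 1),
            (∑ s ∈ Finset.Ico (t-τ) (t+1), ‖Δ (s : ℤ)‖^2) := by
        rw [Finset.sum_add_distrib, ← Finset.mul_sum, ← Finset.mul_sum]
    _ ≤ 2*(2+ρ)^2 * (∑ t ∈ Finset.range (T + 1), ‖Δ (t : ℤ)‖^2)
        + (8*L^2*((τ:ℝ)+1)) * (((τ:ℝ)+1) * ∑ s ∈ Finset.range (T + 1), ‖Δ (s : ℤ)‖^2) := by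
        have hsw := aux_swap τ T (fun s => ‖Δ (s : ℤ)‖^2) (fun s => sq_nonneg _)
        have h8 : (0:ℝ) ≤ 8*L^2*((τ:ℝ)+1) := by positivity
        exact add_le_add le_rfl (mul_le_mul_of_nonneg_left hsw h8)
    _ = (2 * (2 + ρ) ^ 2 + 8 * L ^ 2 * ((τ : ℝ) + 1) ^ 2) *
        ∑ t ∈ Finset.range (T + 1), ‖Δ (t : ℤ)‖ ^ 2 := by ring
end

section
/- (Theorem 1, sublinear convergence rate.) Under Assumption A, set c := min{γ/2 − 3L/2 − Lδτ, ρ/2 − Lτ/δ} > 0 and μ := 2(2 + ρ)² + 8L²(τ + 1)². For any ε > 0, if T ∈ ℕ is such that the squared optimality gap satisfies ‖∇̃𝓛(x^t)‖² ≥ ε for all 0 ≤ t < T, then T · ε ≤ (μ/c)(F(x^1, x^0) − L̲); hence the first time T(ε) at which ‖∇̃𝓛(x^t)‖² drops below ε satisfies T(ε) ≤ (μ/c)(F(x^1, x^0) − L̲)/ε + 1, so the optimality gap converges to 0 at a sublinear rate. -/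
/-!
Write `Δₜ = x (t + 1) - x t`. Strong convexity of the surrogate, the descent lemma and Young's
inequality show that each step decreases `𝓛` by `(ρ / 2) ‖Δₜ‖²`, up to an error
`(L / δ) ∑ ‖Δₛ‖²` over the last `τ` steps caused by the stale gradients. Each `Δₛ` lies in at most
`τ` such windows, so telescoping gives `c ∑_{t < T} ‖Δₜ‖² ≤ F(x¹, x⁰) - L̲`. On the other hand
`x (t + 1)` is a fixed point of a perturbed proximal-gradient map, so nonexpansiveness of `Prox_h`
bounds the optimality gap at `x t` by `(2 + ρ) ‖Δₜ‖ + 2 L ∑ ‖Δₛ‖` over a window of length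
`τ + 1`, whence `∑_{t < T} ‖∇̃𝓛(x t)‖² ≤ μ ∑_{t < T} ‖Δₜ‖²`. If all gaps before `T` are at least
`ε`, the two bounds give `T ε ≤ (μ / c) (F(x¹, x⁰) - L̲)`.
-/

open scoped RealInnerProductSpace
open Finset

theorem sum_range_sum_Ico_le {a : ℕ → ℝ} (ha : ∀ s, 0 ≤ a s) (k n : ℕ) :
    ∑ t ∈ range n, ∑ s ∈ Ico (t + 1 - k) (t + 1), a s ≤ k * ∑ s ∈ range n, a s := by
  rw [sum_comm' (t' := range n) (s' := fun s => Ico s (min (s + k) n))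
    (fun t s => by simp only [mem_range, mem_Ico]; omega), mul_sum]
  refine sum_le_sum fun s _ => ?_
  rw [sum_const, nsmul_eq_mul, Nat.card_Ico]
  exact mul_le_mul_of_nonneg_right (by norm_cast; omega) (ha s)

theorem two_mul_mul_sum_le {ι : Type*} (S : Finset ι) (d : ι → ℝ) (y : ℝ) {δ : ℝ} (hδ : 0 < δ) :
    2 * y * ∑ s ∈ S, d s ≤ δ * #S * y ^ 2 + δ⁻¹ * ∑ s ∈ S, d s ^ 2 := by
  have hterm : ∀ s ∈ S, 2 * y * d s ≤ δ * y ^ 2 + δ⁻¹ * d s ^ 2 := fun s _ => by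
    have := sq_nonneg (δ * y - d s)
    rw [← mul_le_mul_iff_of_pos_left hδ]
    field_simp
    nlinarith
  calc 2 * y * ∑ s ∈ S, d s = ∑ s ∈ S, 2 * y * d s := mul_sum ..
    _ ≤ ∑ s ∈ S, (δ * y ^ 2 + δ⁻¹ * d s ^ 2) := sum_le_sum hterm
    _ = δ * #S * y ^ 2 + δ⁻¹ * ∑ s ∈ S, d s ^ 2 := by
      rw [sum_add_distrib, sum_const, nsmul_eq_mul, mul_sum]; ring

theorem sum_range_mul_le_of_delayed_descent {V a : ℕ → ℝ} {β K Vlo : ℝ} {τ : ℕ}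
    (ha : ∀ t, 0 ≤ a t) (hβ : 0 ≤ β) (hK : 0 ≤ K)
    (hstep : ∀ t, V (t + 1) + β * a t ≤ V t + K * ∑ s ∈ Ico (t - τ) t, a s)
    (hlo : ∀ t, Vlo ≤ V t) (T : ℕ) :
    (β - K * τ) * ∑ t ∈ range T, a t ≤ V 1 + β * a 0 - Vlo := by
  have htele : ∀ n, V (n + 1) + β * a n + β * ∑ t ∈ range n, a t
      ≤ V 1 + β * a 0 + K * ∑ t ∈ range n, ∑ s ∈ Ico (t + 1 - τ) (t + 1), a s := by
    intro n
    induction n with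
    | zero => simp
    | succ n ih =>
      simp only [sum_range_succ]
      linarith [hstep (n + 1)]
  cases T with
  | zero =>
    rw [range_zero, sum_empty, mul_zero]
    linarith [hlo 1, mul_nonneg hβ (ha 0)]
  | succ n =>
    have hwin := mul_le_mul_of_nonneg_left (sum_range_sum_Ico_le ha τ n) hK
    have := mul_nonneg (mul_nonneg hK (Nat.cast_nonneg τ)) (ha n)
    rw [sum_range_succ]
    nlinarith [htele n, hlo (n + 1)]

theorem sum_range_sq_le_of_le_window {g d : ℕ → ℝ} {A B : ℝ} {τ : ℕ} (hg0 : ∀ t, 0 ≤ g t)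
    (hg : ∀ t, g t ≤ A * d t + B * ∑ s ∈ Ico (t - τ) (t + 1), d s) (T : ℕ) :
    ∑ t ∈ range T, g t ^ 2 ≤ (2 * A ^ 2 + 2 * B ^ 2 * (τ + 1) ^ 2) * ∑ t ∈ range T, d t ^ 2 := by
  have hwin := sum_range_sum_Ico_le (fun s => sq_nonneg (d s)) (τ + 1) T
  simp only [Nat.add_sub_add_right] at hwin
  have hterm : ∀ t, g t ^ 2 ≤ 2 * A ^ 2 * d t ^ 2
      + 2 * B ^ 2 * (τ + 1) * ∑ s ∈ Ico (t - τ) (t + 1), d s ^ 2 := fun t => by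
    have hcs : (∑ s ∈ Ico (t - τ) (t + 1), d s) ^ 2
        ≤ (τ + 1) * ∑ s ∈ Ico (t - τ) (t + 1), d s ^ 2 := by
      refine (sq_sum_le_card_mul_sum_sq ..).trans (mul_le_mul_of_nonneg_right ?_
        (sum_nonneg fun s _ => sq_nonneg (d s)))
      rw [Nat.card_Ico]; norm_cast; omega
    nlinarith [hg t, hg0 t, sq_nonneg (A * d t - B * ∑ s ∈ Ico (t - τ) (t + 1), d s),
      mul_le_mul_of_nonneg_left hcs (sq_nonneg B)]
  calc ∑ t ∈ range T, g t ^ 2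
      ≤ ∑ t ∈ range T, (2 * A ^ 2 * d t ^ 2
          + 2 * B ^ 2 * (τ + 1) * ∑ s ∈ Ico (t - τ) (t + 1), d s ^ 2) :=
        sum_le_sum fun t _ => hterm t
    _ ≤ _ := by
      rw [sum_add_distrib, ← mul_sum, ← mul_sum]
      push_cast at hwin
      nlinarith [mul_le_mul_of_nonneg_left hwin
        (by positivity : (0 : ℝ) ≤ 2 * B ^ 2 * (τ + 1))]

theorem natCast_sInf_le_of_forall_le {g : ℕ → ℝ} {ε B : ℝ} (hε : 0 < ε)
    (h : ∀ T : ℕ, (∀ t, t < T → ε ≤ g t) → T * ε ≤ B) :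
    ((sInf {t | g t < ε} : ℕ) : ℝ) ≤ B / ε + 1 := by
  have hsInf : ∀ t, t < sInf {t | g t < ε} → ε ≤ g t := fun t ht =>
    not_lt.1 (Nat.notMem_of_lt_sInf ht)
  have := (le_div_iff₀ hε).2 (h _ hsInf)
  linarith

theorem norm_sub_le_sum_Ico {F : Type*} [SeminormedAddCommGroup F] (x : ℕ → F) {a b c d : ℕ}
    (hca : c ≤ a) (hab : a ≤ b) (hbd : b ≤ d) :
    ‖x b - x a‖ ≤ ∑ s ∈ Ico c d, ‖x (s + 1) - x s‖ := by
  calc ‖x b - x a‖ = dist (x a) (x b) := by rw [dist_comm, dist_eq_norm]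
    _ ≤ ∑ s ∈ Ico a b, dist (x s) (x (s + 1)) := dist_le_Ico_sum_dist x hab
    _ = ∑ s ∈ Ico a b, ‖x (s + 1) - x s‖ :=
      sum_congr rfl fun s _ => by rw [dist_comm, dist_eq_norm]
    _ ≤ ∑ s ∈ Ico c d, ‖x (s + 1) - x s‖ :=
      sum_le_sum_of_subset_of_nonneg (Ico_subset_Ico hca hbd) fun _ _ _ => norm_nonneg _

theorem norm_inv_natCast_smul_sum_le {F : Type*} [SeminormedAddCommGroup F] [NormedSpace ℝ F]
    {m : ℕ} (hm : 0 < m) {v : Fin m → F} {B : ℝ} (hv : ∀ j, ‖v j‖ ≤ B) :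
    ‖(m : ℝ)⁻¹ • ∑ j, v j‖ ≤ B := by
  have hm' : (0 : ℝ) < m := Nat.cast_pos.2 hm
  calc ‖(m : ℝ)⁻¹ • ∑ j, v j‖ ≤ (m : ℝ)⁻¹ * ∑ _j : Fin m, B := by
        rw [norm_smul, Real.norm_of_nonneg (inv_nonneg.2 hm'.le)]
        gcongr
        exact (norm_sum_le _ _).trans (sum_le_sum fun j _ => hv j)
    _ = B := by simp [field]

theorem norm_sub_prox_le_of_eq_prox {F : Type*} [SeminormedAddCommGroup F] {prox : F → F}
    (hnonexp : ∀ z₁ z₂, ‖prox z₁ - prox z₂‖ ≤ ‖z₁ - z₂‖) {u v : F} (hu : u = prox (u - v))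
    (X G : F) :
    ‖X - prox (X - G)‖ ≤ 2 * ‖u - X‖ + ‖v - G‖ := by
  calc ‖X - prox (X - G)‖ ≤ ‖X - u‖ + ‖prox (u - v) - prox (X - G)‖ := by
        rw [← hu]; exact norm_sub_le_norm_sub_add_norm_sub _ _ _
    _ ≤ ‖u - X‖ + ‖(u - X) - (v - G)‖ := by
        rw [norm_sub_rev X u, show (u - X) - (v - G) = (u - v) - (X - G) by abel]
        gcongr; exact hnonexp _ _
    _ ≤ 2 * ‖u - X‖ + ‖v - G‖ := by linarith [norm_sub_le (u - X) (v - G)]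

section InnerProductSpace

variable {E : Type*} [NormedAddCommGroup E] [InnerProductSpace ℝ E]

theorem StrongConvexOn.le_of_isMinOn_add {g ψ : E → ℝ} {g' : E →L[ℝ] ℝ} {γ : ℝ} {u : E}
    (hψ : StrongConvexOn Set.univ γ ψ) (hg : HasFDerivAt g g' u)
    (hmin : IsMinOn (fun v => ψ v + g v) Set.univ u) (y : E) :
    ψ u - g' (y - u) + γ / 2 * ‖y - u‖ ^ 2 ≤ ψ y := by
  set d := y - u
  let φ : ℝ → ℝ := fun l => g (u + l • d) + l * (ψ y - ψ u) - l * (1 - l) * (γ / 2 * ‖d‖ ^ 2)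
  have hφmin : IsMinOn φ (Set.Icc 0 1) 0 := by
    intro l ⟨hl0, hl1⟩
    have hseg := hψ.2 (Set.mem_univ u) (Set.mem_univ y) (sub_nonneg.2 hl1) hl0 (by ring)
    rw [show (1 - l) • u + l • y = u + l • d by simp only [d]; module, norm_sub_rev] at hseg
    have := hmin (Set.mem_univ (u + l • d))
    simp only [smul_eq_mul, Set.mem_ofPred_eq] at hseg this ⊢
    simp only [φ, zero_smul, add_zero, zero_mul, sub_zero]
    nlinarith
  have hline : HasDerivAt (fun l : ℝ => u + l • d) d 0 := by
    simpa using ((hasDerivAt_id (0 : ℝ)).smul_const d).const_add u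
  have hφ' : HasDerivAt φ (g' d + (ψ y - ψ u) - γ / 2 * ‖d‖ ^ 2) 0 := by
    refine (((hg.comp_hasDerivAt_of_eq 0 hline (by simp)).add
      ((hasDerivAt_id (0 : ℝ)).mul_const (ψ y - ψ u))).sub
      (((hasDerivAt_id (0 : ℝ)).mul ((hasDerivAt_id (0 : ℝ)).const_sub 1)).mul_const
        (γ / 2 * ‖d‖ ^ 2))).congr_deriv ?_
    simp
  have hone : (1 : ℝ) ∈ posTangentConeAt (Set.Icc 0 1) 0 :=
    mem_posTangentConeAt_of_segment_subset (by simp [segment_eq_Icc])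
  have := hφmin.localize.hasFDerivWithinAt_nonneg hφ'.hasDerivWithinAt.hasFDerivWithinAt hone
  rw [ContinuousLinearMap.toSpanSingleton_apply, one_smul] at this
  linarith

theorem ConvexOn.le_of_isMinOn_add {g ψ : E → ℝ} {g' : E →L[ℝ] ℝ} {u : E}
    (hψ : ConvexOn ℝ Set.univ ψ) (hg : HasFDerivAt g g' u)
    (hmin : IsMinOn (fun v => ψ v + g v) Set.univ u) (y : E) :
    ψ u - g' (y - u) ≤ ψ y := by
  simpa using (strongConvexOn_zero.2 hψ).le_of_isMinOn_add hg hmin y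

theorem Differentiable.hasDerivAt_comp_add_smul [CompleteSpace E] {f : E → ℝ}
    (hf : Differentiable ℝ f) (x d : E) (θ : ℝ) :
    HasDerivAt (fun θ : ℝ => f (x + θ • d)) ⟪gradient f (x + θ • d), d⟫ θ := by
  have hline : HasDerivAt (fun θ : ℝ => x + θ • d) d θ := by
    simpa using ((hasDerivAt_id θ).smul_const d).const_add x
  exact ((hf _).hasGradientAt.hasFDerivAt.comp_hasDerivAt θ hline).congr_deriv
    (InnerProductSpace.toDual_apply_apply ..)

theorem abs_sub_sub_inner_gradient_le [CompleteSpace E] {f : E → ℝ} {L : ℝ}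
    (hf : Differentiable ℝ f)
    (hlip : ∀ u v, ‖gradient f u - gradient f v‖ ≤ L * ‖u - v‖) (x y : E) :
    |f y - f x - ⟪gradient f x, y - x⟫| ≤ L / 2 * ‖y - x‖ ^ 2 := by
  set d := y - x
  have hφ : ∀ θ : ℝ, HasDerivAt (fun θ : ℝ => f (x + θ • d) - f x - θ * ⟪gradient f x, d⟫)
      (⟪gradient f (x + θ • d), d⟫ - ⟪gradient f x, d⟫) θ := fun θ =>
    (((hf.hasDerivAt_comp_add_smul x d θ).sub_const (f x)).sub
      ((hasDerivAt_id θ).mul_const ⟪gradient f x, d⟫)).congr_deriv (by simp)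
  have hB : ∀ θ : ℝ, HasDerivAt (fun θ : ℝ => L / 2 * θ ^ 2 * ‖d‖ ^ 2) (L * θ * ‖d‖ ^ 2) θ :=
    fun θ => (((hasDerivAt_pow 2 θ).const_mul (L / 2)).mul_const (‖d‖ ^ 2)).congr_deriv
      (by push_cast; ring)
  have hbound : ∀ θ ∈ Set.Ico (0 : ℝ) 1,
      ‖⟪gradient f (x + θ • d), d⟫ - ⟪gradient f x, d⟫‖ ≤ L * θ * ‖d‖ ^ 2 := by
    intro θ ⟨hθ0, _⟩
    rw [← inner_sub_left, Real.norm_eq_abs]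
    calc |⟪gradient f (x + θ • d) - gradient f x, d⟫|
        ≤ ‖gradient f (x + θ • d) - gradient f x‖ * ‖d‖ := abs_real_inner_le_norm _ _
      _ ≤ L * ‖θ • d‖ * ‖d‖ := by gcongr; simpa using hlip (x + θ • d) x
      _ = L * θ * ‖d‖ ^ 2 := by rw [norm_smul, Real.norm_of_nonneg hθ0]; ring
  have := image_norm_le_of_norm_deriv_right_le_deriv_boundary
    (fun θ _ => (hφ θ).continuousAt.continuousWithinAt) (fun θ _ => (hφ θ).hasDerivWithinAt)
    (by simp) hB hbound (Set.right_mem_Icc.2 zero_le_one)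
  simpa [d] using this

theorem hasFDerivAt_div_two_mul_norm_sub_sq (c : ℝ) (z u : E) :
    HasFDerivAt (fun v => c / 2 * ‖v - z‖ ^ 2) (c • innerSL ℝ (u - z)) u := by
  refine ((((hasFDerivAt_id u).sub_const z).norm_sq).const_mul (c / 2)).congr_fderiv ?_
  ext v
  simp only [smul_apply, ContinuousLinearMap.comp_apply, innerSL_apply_apply,
    ContinuousLinearMap.id_apply, id, smul_eq_mul, nsmul_eq_mul]
  ring

theorem hasFDerivAt_inner_sub (w X u : E) : HasFDerivAt (fun v => ⟪w, v - X⟫) (innerSL ℝ w) u :=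
  ((innerSL ℝ w).hasFDerivAt.comp u ((hasFDerivAt_id u).sub_const X)).congr_fderiv (by ext; simp)

section Prox

variable {h : E → ℝ} {prox : E → E}

theorem ConvexOn.inner_le_of_isMinOn_prox (hconv : ConvexOn ℝ Set.univ h) {z u : E}
    (hmin : IsMinOn (fun y => h y + 1 / 2 * ‖y - z‖ ^ 2) Set.univ u) (y : E) :
    h u + ⟪z - u, y - u⟫ ≤ h y := by
  have := hconv.le_of_isMinOn_add (hasFDerivAt_div_two_mul_norm_sub_sq 1 z u) hmin y
  simp only [innerSL_apply_apply, one_smul] at this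
  rw [← neg_sub u z, inner_neg_left]
  linarith

theorem ConvexOn.norm_prox_sub_prox_le (hconv : ConvexOn ℝ Set.univ h)
    (hprox : ∀ z, IsMinOn (fun y => h y + 1 / 2 * ‖y - z‖ ^ 2) Set.univ (prox z)) (z₁ z₂ : E) :
    ‖prox z₁ - prox z₂‖ ≤ ‖z₁ - z₂‖ := by
  have h₁ := hconv.inner_le_of_isMinOn_prox (hprox z₁) (prox z₂)
  have h₂ := hconv.inner_le_of_isMinOn_prox (hprox z₂) (prox z₁)
  have hfirm : ‖prox z₁ - prox z₂‖ ^ 2 ≤ ⟪z₁ - z₂, prox z₁ - prox z₂⟫ := by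
    rw [← real_inner_self_eq_norm_sq]
    have : ⟪z₁ - prox z₁, prox z₂ - prox z₁⟫ + ⟪z₂ - prox z₂, prox z₁ - prox z₂⟫
        = ⟪prox z₁ - prox z₂, prox z₁ - prox z₂⟫ - ⟪z₁ - z₂, prox z₁ - prox z₂⟫ := by
      simp only [inner_sub_left, inner_sub_right, real_inner_comm]
      ring
    linarith
  have := hfirm.trans (real_inner_le_norm _ _)
  nlinarith [norm_nonneg (prox z₁ - prox z₂), norm_nonneg (z₁ - z₂)]

theorem isMinOn_add_half_norm_sub_sq_of_le {u v : E} (hsub : ∀ y, h u - ⟪v, y - u⟫ ≤ h y) :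
    IsMinOn (fun y => h y + 1 / 2 * ‖y - (u - v)‖ ^ 2) Set.univ u := by
  refine isMinOn_univ_iff.2 fun y => ?_
  have hexp : ‖y - (u - v)‖ ^ 2 = ‖y - u‖ ^ 2 + 2 * ⟪v, y - u⟫ + ‖v‖ ^ 2 := by
    rw [show y - (u - v) = (y - u) + v by abel, norm_add_sq_real, real_inner_comm]
  simp only [sub_sub_cancel, hexp]
  nlinarith [hsub y, sq_nonneg ‖y - u‖]

end Prox

section Surrogate

variable [CompleteSpace E] {f₁ h : E → ℝ} {L ρ γ : ℝ} {X u w : E}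

theorem surrogate_descent (hf₁ : Differentiable ℝ f₁)
    (hlip : ∀ u v, ‖gradient f₁ u - gradient f₁ v‖ ≤ L * ‖u - v‖)
    (hψ : StrongConvexOn Set.univ γ (fun y => h y + ρ / 2 * ‖y - X‖ ^ 2))
    (hmin : IsMinOn (fun y => f₁ y + h y + ρ / 2 * ‖y - X‖ ^ 2 + ⟪w, y - X⟫) Set.univ u) :
    f₁ u + h u + ρ / 2 * ‖u - X‖ ^ 2 + ⟪w, u - X⟫ + (γ - L) / 2 * ‖u - X‖ ^ 2 ≤ f₁ X + h X := by
  have hopt := hψ.le_of_isMinOn_add ((hf₁ u).hasGradientAt.hasFDerivAt.add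
    (hasFDerivAt_inner_sub w X u)) (g := fun v => f₁ v + ⟪w, v - X⟫)
    (isMinOn_univ_iff.2 fun y => by linarith [isMinOn_univ_iff.1 hmin y]) X
  have hlow := (abs_le.1 (abs_sub_sub_inner_gradient_le hf₁ hlip u X)).1
  simp only [add_apply, InnerProductSpace.toDual_apply_apply,
    innerSL_apply_apply, sub_self, norm_zero] at hopt
  rw [norm_sub_rev X u] at hopt hlow
  have hw : ⟪w, u - X⟫ = -⟪w, X - u⟫ := by rw [← inner_neg_right, neg_sub]
  linarith

theorem surrogate_subgradient (hf₁ : DifferentiableAt ℝ f₁ u) (hconv : ConvexOn ℝ Set.univ h)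
    (hmin : IsMinOn (fun y => f₁ y + h y + ρ / 2 * ‖y - X‖ ^ 2 + ⟪w, y - X⟫) Set.univ u) (y : E) :
    h u - ⟪gradient f₁ u + ρ • (u - X) + w, y - u⟫ ≤ h y := by
  have hopt := hconv.le_of_isMinOn_add (((hf₁.hasGradientAt.hasFDerivAt.add
    (hasFDerivAt_div_two_mul_norm_sub_sq ρ X u)).add (hasFDerivAt_inner_sub w X u)))
    (g := fun v => f₁ v + ρ / 2 * ‖v - X‖ ^ 2 + ⟪w, v - X⟫)
    (isMinOn_univ_iff.2 fun y => by linarith [isMinOn_univ_iff.1 hmin y]) y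
  simpa only [add_apply, smul_apply,
    InnerProductSpace.toDual_apply_apply, innerSL_apply_apply, inner_add_left,
    real_inner_smul_left, smul_eq_mul] using hopt

end Surrogate

section Iteration

variable [CompleteSpace E] {m : ℕ} {Lf : Fin m → E → ℝ} {L : ℝ}

theorem abs_avg_sub_sub_inner_le (hm : 0 < m) (hdiff : ∀ j, Differentiable ℝ (Lf j))
    (hlip : ∀ j u v, ‖gradient (Lf j) u - gradient (Lf j) v‖ ≤ L * ‖u - v‖) (x y : E) :
    |(m : ℝ)⁻¹ * ∑ j, Lf j y - (m : ℝ)⁻¹ * ∑ j, Lf j x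
      - ⟪(m : ℝ)⁻¹ • ∑ j, gradient (Lf j) x, y - x⟫| ≤ L / 2 * ‖y - x‖ ^ 2 := by
  have := norm_inv_natCast_smul_sum_le hm
    (v := fun j => Lf j y - Lf j x - ⟪gradient (Lf j) x, y - x⟫)
    fun j => abs_sub_sub_inner_gradient_le (hdiff j) (hlip j) x y
  rw [Real.norm_eq_abs, smul_eq_mul, sum_sub_distrib, sum_sub_distrib, mul_sub, mul_sub] at this
  rwa [real_inner_smul_left, sum_inner]

theorem norm_avg_gradient_sub_le (hm : 0 < m)
    (hlip : ∀ j u v, ‖gradient (Lf j) u - gradient (Lf j) v‖ ≤ L * ‖u - v‖)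
    {y : Fin m → E} {z : E} {r : ℝ} (hy : ∀ j, ‖y j - z‖ ≤ r) (hL : 0 ≤ L) :
    ‖(m : ℝ)⁻¹ • ∑ j, gradient (Lf j) (y j) - (m : ℝ)⁻¹ • ∑ j, gradient (Lf j) z‖ ≤ L * r := by
  rw [← smul_sub, ← sum_sub_distrib]
  exact norm_inv_natCast_smul_sum_le hm fun j => (hlip j _ _).trans (by gcongr; exact hy j)

/-- `x (t + 1)` minimises the surrogate `G_t`, with worker `i` in the role of `L_1`; worker `j`'s
gradient is the stale one computed at iteration `tj t j`. -/
def IsDelayedProxSequence (Lf : Fin m → E → ℝ) (i : Fin m) (h : E → ℝ) (ρ : ℝ)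
    (tj : ℕ → Fin m → ℕ) (x : ℕ → E) : Prop :=
  ∀ t, IsMinOn (fun y => Lf i y + h y + ρ / 2 * ‖y - x t‖ ^ 2 +
    ⟪(m : ℝ)⁻¹ • ∑ j, gradient (Lf j) (x (tj t j)) - gradient (Lf i) (x (tj t i)), y - x t⟫)
    Set.univ (x (t + 1))

variable {i : Fin m} {h : E → ℝ} {ρ : ℝ} {τ : ℕ} {tj : ℕ → Fin m → ℕ} {x : ℕ → E}

theorem IsDelayedProxSequence.descent (hx : IsDelayedProxSequence Lf i h ρ tj x)
    {γ δ : ℝ} (hL : 0 ≤ L) (hδ : 0 < δ) (hγ : 3 * L + 2 * L * δ * τ ≤ γ)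
    (hdiff : ∀ j, Differentiable ℝ (Lf j))
    (hlip : ∀ j u v, ‖gradient (Lf j) u - gradient (Lf j) v‖ ≤ L * ‖u - v‖)
    (hstrong : ∀ z, StrongConvexOn Set.univ γ (fun y => h y + ρ / 2 * ‖y - z‖ ^ 2))
    (htj : ∀ t j, t - τ ≤ tj t j ∧ tj t j ≤ t) (t : ℕ) :
    (m : ℝ)⁻¹ * ∑ j, Lf j (x (t + 1)) + h (x (t + 1)) + ρ / 2 * ‖x (t + 1) - x t‖ ^ 2
      ≤ (m : ℝ)⁻¹ * ∑ j, Lf j (x t) + h (x t)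
        + L / δ * ∑ s ∈ Ico (t - τ) t, ‖x (s + 1) - x s‖ ^ 2 := by
  have hm := i.pos
  set S := ∑ s ∈ Ico (t - τ) t, ‖x (s + 1) - x s‖
  have hdelay : ∀ j, ‖x (tj t j) - x t‖ ≤ S := fun j => by
    rw [norm_sub_rev]; exact norm_sub_le_sum_Ico x (htj t j).1 (htj t j).2 le_rfl
  have hstep := surrogate_descent (hdiff i) (hlip i) (hstrong (x t)) (hx t)
  have hup := (abs_le.1 (abs_avg_sub_sub_inner_le hm hdiff hlip (x t) (x (t + 1)))).2
  have hlow := (abs_le.1 (abs_sub_sub_inner_gradient_le (hdiff i) (hlip i) (x t) (x (t + 1)))).1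
  have hcross : ⟪(m : ℝ)⁻¹ • ∑ j, gradient (Lf j) (x t), x (t + 1) - x t⟫
      - ⟪gradient (Lf i) (x t), x (t + 1) - x t⟫
      - ⟪(m : ℝ)⁻¹ • ∑ j, gradient (Lf j) (x (tj t j)) - gradient (Lf i) (x (tj t i)),
          x (t + 1) - x t⟫
      ≤ L * (2 * ‖x (t + 1) - x t‖ * S) := by
    rw [← inner_sub_left, ← inner_sub_left]
    calc _ = ⟪((m : ℝ)⁻¹ • ∑ j, gradient (Lf j) (x t)
            - (m : ℝ)⁻¹ • ∑ j, gradient (Lf j) (x (tj t j)))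
          + (gradient (Lf i) (x (tj t i)) - gradient (Lf i) (x t)), x (t + 1) - x t⟫ := by
          congr 1; abel
      _ ≤ (L * S + L * S) * ‖x (t + 1) - x t‖ :=
        (real_inner_le_norm _ _).trans (mul_le_mul_of_nonneg_right
          ((norm_add_le _ _).trans (add_le_add
            (by rw [norm_sub_rev]; exact norm_avg_gradient_sub_le hm hlip hdelay hL)
            ((hlip i _ _).trans (by gcongr; exact hdelay i)))) (norm_nonneg _))
      _ = L * (2 * ‖x (t + 1) - x t‖ * S) := by ring
  have hcard : ((Ico (t - τ) t).card : ℝ) ≤ τ := by rw [Nat.card_Ico]; norm_cast; omega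
  have hamgm : L * (2 * ‖x (t + 1) - x t‖ * S) ≤ L * δ * τ * ‖x (t + 1) - x t‖ ^ 2
      + L / δ * ∑ s ∈ Ico (t - τ) t, ‖x (s + 1) - x s‖ ^ 2 := by
    have hsq := two_mul_mul_sum_le (Ico (t - τ) t) (fun s => ‖x (s + 1) - x s‖)
      ‖x (t + 1) - x t‖ hδ
    calc L * (2 * ‖x (t + 1) - x t‖ * S) ≤ L * (δ * τ * ‖x (t + 1) - x t‖ ^ 2
          + δ⁻¹ * ∑ s ∈ Ico (t - τ) t, ‖x (s + 1) - x s‖ ^ 2) :=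
          mul_le_mul_of_nonneg_left (hsq.trans (by gcongr)) hL
      _ = _ := by ring
  linarith [mul_nonneg (sub_nonneg.2 hγ) (sq_nonneg ‖x (t + 1) - x t‖)]

theorem IsDelayedProxSequence.prox_gap_le (hx : IsDelayedProxSequence Lf i h ρ tj x)
    (hL : 0 ≤ L) (hρ : 0 ≤ ρ) (hdiff : ∀ j, Differentiable ℝ (Lf j))
    (hlip : ∀ j u v, ‖gradient (Lf j) u - gradient (Lf j) v‖ ≤ L * ‖u - v‖)
    (hconv : ConvexOn ℝ Set.univ h) {prox : E → E}
    (hprox : ∀ z, IsMinOn (fun y => h y + 1 / 2 * ‖y - z‖ ^ 2) Set.univ (prox z))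
    (hprox_unique : ∀ z y, IsMinOn (fun w => h w + 1 / 2 * ‖w - z‖ ^ 2) Set.univ y → y = prox z)
    (htj : ∀ t j, t - τ ≤ tj t j ∧ tj t j ≤ t) (t : ℕ) :
    ‖x t - prox (x t - (m : ℝ)⁻¹ • ∑ j, gradient (Lf j) (x t))‖
      ≤ (2 + ρ) * ‖x (t + 1) - x t‖ + 2 * L * ∑ s ∈ Ico (t - τ) (t + 1), ‖x (s + 1) - x s‖ := by
  have hm := i.pos
  set S := ∑ s ∈ Ico (t - τ) (t + 1), ‖x (s + 1) - x s‖
  have hdelay : ∀ j, ‖x (tj t j) - x t‖ ≤ S := fun j => by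
    rw [norm_sub_rev]; exact norm_sub_le_sum_Ico x (htj t j).1 (htj t j).2 t.le_succ
  have hdelay_succ : ‖x (t + 1) - x (tj t i)‖ ≤ S :=
    norm_sub_le_sum_Ico x (htj t i).1 ((htj t i).2.trans t.le_succ) le_rfl
  have hfix := hprox_unique _ _
    (isMinOn_add_half_norm_sub_sq_of_le (surrogate_subgradient (hdiff i _) hconv (hx t)))
  refine (norm_sub_prox_le_of_eq_prox (hconv.norm_prox_sub_prox_le hprox) hfix (x t) _).trans ?_
  have hres : ‖gradient (Lf i) (x (t + 1)) + ρ • (x (t + 1) - x t)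
      + ((m : ℝ)⁻¹ • ∑ j, gradient (Lf j) (x (tj t j)) - gradient (Lf i) (x (tj t i)))
      - (m : ℝ)⁻¹ • ∑ j, gradient (Lf j) (x t)‖ ≤ L * S + ρ * ‖x (t + 1) - x t‖ + L * S := by
    calc _ = ‖(gradient (Lf i) (x (t + 1)) - gradient (Lf i) (x (tj t i)))
          + ρ • (x (t + 1) - x t)
          + ((m : ℝ)⁻¹ • ∑ j, gradient (Lf j) (x (tj t j))
            - (m : ℝ)⁻¹ • ∑ j, gradient (Lf j) (x t))‖ := by congr 1; abel
      _ ≤ _ := norm_add₃_le.trans (add_le_add_three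
          ((hlip i _ _).trans (by gcongr))
          (by rw [norm_smul, Real.norm_of_nonneg hρ])
          (norm_avg_gradient_sub_le hm hlip hdelay hL))
  linarith

end Iteration

end InnerProductSpace

theorem stmt_11_general
    {p m τ : ℕ} (hm : 0 < m)
    {L ρ γ : ℝ}
    (hL : 0 < L) (hρ : 0 < ρ)
    (Lf : Fin m → EuclideanSpace ℝ (Fin p) → ℝ)
    (hdiff : ∀ j, Differentiable ℝ (Lf j))
    (hlip : ∀ j (u v : EuclideanSpace ℝ (Fin p)), ‖gradient (Lf j) u - gradient (Lf j) v‖ ≤ L * ‖u - v‖)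
    (h : EuclideanSpace ℝ (Fin p) → ℝ)
    (hconv : ConvexOn ℝ Set.univ h)
    (hstrong : ∀ z : EuclideanSpace ℝ (Fin p), StrongConvexOn Set.univ γ (fun y => h y + ρ / 2 * ‖y - z‖ ^ 2))
    (tj : ℕ → Fin m → ℕ)
    (htj : ∀ t j, t - τ ≤ tj t j ∧ tj t j ≤ t)
    (x : ℕ → EuclideanSpace ℝ (Fin p))
    (hupdate : ∀ t, ∀ y : EuclideanSpace ℝ (Fin p),
      Lf ⟨0, hm⟩ (x (t + 1)) + h (x (t + 1)) + ρ / 2 * ‖x (t + 1) - x t‖ ^ 2 +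
          ⟪((m : ℝ)⁻¹ • ∑ j, gradient (Lf j) (x (tj t j))) - gradient (Lf ⟨0, hm⟩) (x (tj t ⟨0, hm⟩)), x (t + 1) - x t⟫ ≤
        Lf ⟨0, hm⟩ y + h y + ρ / 2 * ‖y - x t‖ ^ 2 +
          ⟪((m : ℝ)⁻¹ • ∑ j, gradient (Lf j) (x (tj t j))) - gradient (Lf ⟨0, hm⟩) (x (tj t ⟨0, hm⟩)), y - x t⟫)
    (prox : EuclideanSpace ℝ (Fin p) → EuclideanSpace ℝ (Fin p))
    (hprox : ∀ z y, h (prox z) + 1 / 2 * ‖prox z - z‖ ^ 2 ≤ h y + 1 / 2 * ‖y - z‖ ^ 2)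
    (hproxuniq : ∀ z y, (∀ w, h y + 1 / 2 * ‖y - z‖ ^ 2 ≤ h w + 1 / 2 * ‖w - z‖ ^ 2) → y = prox z)
    (δ : ℝ) (hδ : 0 < δ)
    (hA1 : 3 * L + 2 * L * δ * τ < γ)
    (hA2 : 2 * L * τ / δ < ρ)
    (Llo : ℝ) (hLlo : ∀ y : EuclideanSpace ℝ (Fin p), Llo < (((m : ℝ)⁻¹ * ∑ j, Lf j (y)) + h (y)))
    (ε : ℝ) (hε : 0 < ε)
    :
    (∀ T : ℕ, (∀ t, t < T → ε ≤ ‖(x t - prox (x t - (m : ℝ)⁻¹ • (∑ j, gradient (Lf j) (x t))))‖ ^ 2) →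
        (T : ℝ) * ε ≤ (2 * (2 + ρ) ^ 2 + 8 * L ^ 2 * ((τ : ℝ) + 1) ^ 2) / (min (γ / 2 - 3 * L / 2 - L * δ * τ) (ρ / 2 - L * τ / δ)) * ((((m : ℝ)⁻¹ * ∑ j, Lf j (x 1)) + ρ / 2 * ‖x 1 - x 0‖ ^ 2 + h (x 1)) - Llo)) ∧
      (((sInf {t : ℕ | ‖(x t - prox (x t - (m : ℝ)⁻¹ • (∑ j, gradient (Lf j) (x t))))‖ ^ 2 < ε} : ℕ) : ℝ) ≤
        (2 * (2 + ρ) ^ 2 + 8 * L ^ 2 * ((τ : ℝ) + 1) ^ 2) / (min (γ / 2 - 3 * L / 2 - L * δ * τ) (ρ / 2 - L * τ / δ)) * ((((m : ℝ)⁻¹ * ∑ j, Lf j (x 1)) + ρ / 2 * ‖x 1 - x 0‖ ^ 2 + h (x 1)) - Llo) / ε + 1) := by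
  set c := min (γ / 2 - 3 * L / 2 - L * δ * τ) (ρ / 2 - L * τ / δ)
  set μ := 2 * (2 + ρ) ^ 2 + 8 * L ^ 2 * ((τ : ℝ) + 1) ^ 2
  have hc : 0 < c :=
    lt_min (by linarith) (by linarith [show 2 * L * τ / δ = 2 * (L * τ / δ) by ring])
  have hx : IsDelayedProxSequence Lf ⟨0, hm⟩ h ρ tj x := fun t => isMinOn_univ_iff.2 (hupdate t)
  have henergy : ∀ T, c * ∑ t ∈ range T, ‖x (t + 1) - x t‖ ^ 2
      ≤ (m : ℝ)⁻¹ * ∑ j, Lf j (x 1) + ρ / 2 * ‖x 1 - x 0‖ ^ 2 + h (x 1) - Llo := fun T => by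
    have := sum_range_mul_le_of_delayed_descent (fun t => sq_nonneg ‖x (t + 1) - x t‖)
      (by positivity) (by positivity) (hx.descent hL.le hδ hA1.le hdiff hlip hstrong htj)
      (fun t => (hLlo (x t)).le) T
    calc _ ≤ (ρ / 2 - L / δ * τ) * ∑ t ∈ range T, ‖x (t + 1) - x t‖ ^ 2 :=
          mul_le_mul_of_nonneg_right ((min_le_right _ _).trans_eq (by ring))
            (sum_nonneg fun t _ => sq_nonneg _)
      _ ≤ _ := this.trans_eq (by ring)
  have hgap : ∀ T, ∑ t ∈ range T, ‖x t - prox (x t - (m : ℝ)⁻¹ • ∑ j, gradient (Lf j) (x t))‖ ^ 2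
      ≤ μ * ∑ t ∈ range T, ‖x (t + 1) - x t‖ ^ 2 := fun T =>
    (sum_range_sq_le_of_le_window (fun t => norm_nonneg _)
      (hx.prox_gap_le hL.le hρ.le hdiff hlip hconv (fun z => isMinOn_univ_iff.2 (hprox z))
        (fun z y hy => hproxuniq z y (isMinOn_univ_iff.1 hy)) htj) T).trans_eq (by ring)
  have hrate : ∀ T : ℕ, (∀ t, t < T →
      ε ≤ ‖x t - prox (x t - (m : ℝ)⁻¹ • ∑ j, gradient (Lf j) (x t))‖ ^ 2) →
      (T : ℝ) * ε
        ≤ μ / c * ((m : ℝ)⁻¹ * ∑ j, Lf j (x 1) + ρ / 2 * ‖x 1 - x 0‖ ^ 2 + h (x 1) - Llo) :=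
    fun T hT => calc
      (T : ℝ) * ε = ∑ t ∈ range T, ε := by simp
      _ ≤ _ := sum_le_sum fun t ht => hT t (mem_range.1 ht)
      _ ≤ _ := hgap T
      _ ≤ _ := by
        rw [div_mul_eq_mul_div, le_div_iff₀ hc, mul_assoc, mul_comm _ c]
        exact mul_le_mul_of_nonneg_left (henergy T) (by positivity)
  exact ⟨hrate, natCast_sInf_le_of_forall_le hε hrate⟩

theorem stmt_11
    {p m τ : ℕ} (hp : 1 ≤ p) (hm : 0 < m)
    {L ρ γ : ℝ}
    (hL : 0 < L) (hρ : 0 < ρ) (hγ : 0 < γ)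
    (Lf : Fin m → EuclideanSpace ℝ (Fin p) → ℝ)
    (hdiff : ∀ j, Differentiable ℝ (Lf j))
    (hlip : ∀ j (u v : EuclideanSpace ℝ (Fin p)), ‖gradient (Lf j) u - gradient (Lf j) v‖ ≤ L * ‖u - v‖)
    (h : EuclideanSpace ℝ (Fin p) → ℝ)
    (hconv : ConvexOn ℝ Set.univ h)
    (hstrong : ∀ z : EuclideanSpace ℝ (Fin p), StrongConvexOn Set.univ γ (fun y => h y + ρ / 2 * ‖y - z‖ ^ 2))
    (tj : ℕ → Fin m → ℕ)
    (htj : ∀ t j, t - τ ≤ tj t j ∧ tj t j ≤ t)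
    (x : ℕ → EuclideanSpace ℝ (Fin p))
    (hupdate : ∀ t, ∀ y : EuclideanSpace ℝ (Fin p),
      Lf ⟨0, hm⟩ (x (t + 1)) + h (x (t + 1)) + ρ / 2 * ‖x (t + 1) - x t‖ ^ 2 +
          ⟪((m : ℝ)⁻¹ • ∑ j, gradient (Lf j) (x (tj t j))) - gradient (Lf ⟨0, hm⟩) (x (tj t ⟨0, hm⟩)), x (t + 1) - x t⟫ ≤
        Lf ⟨0, hm⟩ y + h y + ρ / 2 * ‖y - x t‖ ^ 2 +
          ⟪((m : ℝ)⁻¹ • ∑ j, gradient (Lf j) (x (tj t j))) - gradient (Lf ⟨0, hm⟩) (x (tj t ⟨0, hm⟩)), y - x t⟫)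
    (prox : EuclideanSpace ℝ (Fin p) → EuclideanSpace ℝ (Fin p))
    (hprox : ∀ z y, h (prox z) + 1 / 2 * ‖prox z - z‖ ^ 2 ≤ h y + 1 / 2 * ‖y - z‖ ^ 2)
    (hproxuniq : ∀ z y, (∀ w, h y + 1 / 2 * ‖y - z‖ ^ 2 ≤ h w + 1 / 2 * ‖w - z‖ ^ 2) → y = prox z)
    (δ : ℝ) (hδ : 0 < δ)
    (hA1 : 3 * L + 2 * L * δ * τ < γ)
    (hA2 : 2 * L * τ / δ < ρ)
    (Llo : ℝ) (hLlo : ∀ y : EuclideanSpace ℝ (Fin p), Llo < (((m : ℝ)⁻¹ * ∑ j, Lf j (y)) + h (y)))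
    (ε : ℝ) (hε : 0 < ε)
    :
    (∀ T : ℕ, (∀ t, t < T → ε ≤ ‖(x t - prox (x t - (m : ℝ)⁻¹ • (∑ j, gradient (Lf j) (x t))))‖ ^ 2) →
        (T : ℝ) * ε ≤ (2 * (2 + ρ) ^ 2 + 8 * L ^ 2 * ((τ : ℝ) + 1) ^ 2) / (min (γ / 2 - 3 * L / 2 - L * δ * τ) (ρ / 2 - L * τ / δ)) * ((((m : ℝ)⁻¹ * ∑ j, Lf j (x 1)) + ρ / 2 * ‖x 1 - x 0‖ ^ 2 + h (x 1)) - Llo)) ∧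
      (((sInf {t : ℕ | ‖(x t - prox (x t - (m : ℝ)⁻¹ • (∑ j, gradient (Lf j) (x t))))‖ ^ 2 < ε} : ℕ) : ℝ) ≤
        (2 * (2 + ρ) ^ 2 + 8 * L ^ 2 * ((τ : ℝ) + 1) ^ 2) / (min (γ / 2 - 3 * L / 2 - L * δ * τ) (ρ / 2 - L * τ / δ)) * ((((m : ℝ)⁻¹ * ∑ j, Lf j (x 1)) + ρ / 2 * ‖x 1 - x 0‖ ^ 2 + h (x 1)) - Llo) / ε + 1) :=
  stmt_11_general hm hL hρ Lf hdiff hlip h hconv hstrong tj htj x hupdate prox hprox hproxuniq δ hδ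
    hA1 hA2 Llo hLlo ε hε
end

section
/- (Descent inequality with inexact subproblem solutions.) In the inexact setting, for every iteration t ≥ 1 and every δ > 0: F(x^{t+1}, x^t) − F(x^t, x^{t−1}) ≤ (3L/2 − γ/2 + Lδτ)‖Δ^{(t)}‖² − (ρ/2)‖Δ^{(t−1)}‖² + (L/δ) Σ_{k=1}^{τ} ‖Δ^{(t−k)}‖² + ⟨ε^t, Δ^{(t)}⟩. -/
/-!
Three estimates are combined. The descent lemma for `L`-smooth functions bounds the change of the
smooth part. The subgradient condition says that the inexact gradient
`ε - ∇L₁(x^{t+1}) - (1/m) Σ ∇L_j(x^{t_j}) + ∇L₁(x^{t₁})` is a subgradient of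
`h + (ρ/2)‖· - x^t‖²` at `x^{t+1}`, so γ-strong convexity bounds the change of `h`. What remains is
the error of the stale gradients, which by the Lipschitz bound and telescoping over the delay window
is at most `2L ‖Δ^{(t)}‖ Σ_{k=1}^{τ} ‖Δ^{(t-k)}‖`; Young's inequality with parameter `δ` splits it
into the `Lδτ` and `L/δ` terms.
-/

open scoped RealInnerProductSpace

theorem inv_mul_sum_le {m : ℕ} (hm : 0 < m) {a : Fin m → ℝ} {B : ℝ} (h : ∀ j, a j ≤ B) :
    (m : ℝ)⁻¹ * ∑ j, a j ≤ B := by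
  rw [inv_mul_le_iff₀ (by exact_mod_cast hm)]
  simpa using Finset.sum_le_card_nsmul Finset.univ a B fun j _ => h j

theorem two_mul_sum_mul_le {ι : Type*} (s : Finset ι) (a : ι → ℝ) (b : ℝ) {δ : ℝ}
    (hδ : 0 < δ) :
    2 * (∑ i ∈ s, a i) * b ≤ δ * s.card * b ^ 2 + (∑ i ∈ s, a i ^ 2) / δ := by
  have hyoung : ∀ i ∈ s, 2 * a i * b ≤ δ * b ^ 2 + a i ^ 2 / δ := fun i _ => by
    rw [← sub_nonneg, show δ * b ^ 2 + a i ^ 2 / δ - 2 * a i * b = (δ * b - a i) ^ 2 / δ by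
      field_simp; ring]
    positivity
  calc 2 * (∑ i ∈ s, a i) * b = ∑ i ∈ s, 2 * a i * b := by
        rw [Finset.mul_sum, Finset.sum_mul]
    _ ≤ ∑ i ∈ s, (δ * b ^ 2 + a i ^ 2 / δ) := Finset.sum_le_sum hyoung
    _ = δ * s.card * b ^ 2 + (∑ i ∈ s, a i ^ 2) / δ := by
        rw [Finset.sum_add_distrib, Finset.sum_const, nsmul_eq_mul, Finset.sum_div]; ring

theorem sub_eq_sum_Icc_of_delta {E : Type*} [AddCommGroup E] {x : ℕ → E} {Δ : ℤ → E}
    (hΔ : ∀ s : ℤ, 0 ≤ s → Δ s = x (s.toNat + 1) - x s.toNat) {t n : ℕ} (hn : n ≤ t) :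
    x t - x (t - n) = ∑ k ∈ Finset.Icc 1 n, Δ ((t : ℤ) - (k : ℤ)) := by
  induction n with
  | zero => simp
  | succ n ih =>
    rw [Finset.sum_Icc_succ_top (by omega), ← ih (by omega), hΔ _ (by omega)]
    rw [show ((t : ℤ) - ((n + 1 : ℕ) : ℤ)).toNat = t - (n + 1) by omega,
      show t - (n + 1) + 1 = t - n by omega]
    abel

theorem norm_sub_le_sum_Icc_of_delta {E : Type*} [SeminormedAddCommGroup E] {x : ℕ → E}
    {Δ : ℤ → E} (hΔ : ∀ s : ℤ, 0 ≤ s → Δ s = x (s.toNat + 1) - x s.toNat) {s t τ : ℕ}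
    (hst : s ≤ t) (hts : t ≤ s + τ) :
    ‖x t - x s‖ ≤ ∑ k ∈ Finset.Icc 1 τ, ‖Δ ((t : ℤ) - (k : ℤ))‖ := by
  have htele := sub_eq_sum_Icc_of_delta hΔ (Nat.sub_le t s)
  rw [Nat.sub_sub_self hst] at htele
  rw [htele]
  refine (norm_sum_le _ _).trans ?_
  exact Finset.sum_le_sum_of_subset_of_nonneg (Finset.Icc_subset_Icc_right (by omega))
    fun _ _ _ => norm_nonneg _

section
variable {E : Type*} [NormedAddCommGroup E] [InnerProductSpace ℝ E]

theorem inner_gradient_sub_le [CompleteSpace E] {f : E → ℝ} {L : ℝ}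
    (hlip : ∀ u v, ‖gradient f u - gradient f v‖ ≤ L * ‖u - v‖) (u v d : E) :
    ⟪gradient f u - gradient f v, d⟫ ≤ L * ‖u - v‖ * ‖d‖ :=
  (real_inner_le_norm _ _).trans (mul_le_mul_of_nonneg_right (hlip u v) (norm_nonneg d))

theorem image_le_add_inner_gradient_add_sq [CompleteSpace E] {f : E → ℝ} {L : ℝ}
    (hf : Differentiable ℝ f) (hlip : ∀ u v, ‖gradient f u - gradient f v‖ ≤ L * ‖u - v‖)
    (a b : E) :
    f b ≤ f a + ⟪gradient f a, b - a⟫ + L / 2 * ‖b - a‖ ^ 2 := by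
  set v := b - a
  -- `f` minus its quadratic upper model along the segment has nonpositive slope
  let φ : ℝ → ℝ := fun s => f (a + s • v) - s * ⟪gradient f a, v⟫ - L / 2 * s ^ 2 * ‖v‖ ^ 2
  have hφ : ∀ s, HasDerivAt φ
      (⟪gradient f (a + s • v), v⟫ - ⟪gradient f a, v⟫ - L * s * ‖v‖ ^ 2) s := by
    intro s
    have hline : HasDerivAt (fun s : ℝ => a + s • v) v s := by
      simpa using ((hasDerivAt_id s).smul_const v).const_add a
    have := (((hf _).hasGradientAt.hasFDerivAt.comp_hasDerivAt s hline).sub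
      ((hasDerivAt_id s).mul_const ⟪gradient f a, v⟫)).sub
      (((hasDerivAt_pow 2 s).const_mul (L / 2)).mul_const (‖v‖ ^ 2))
    exact this.congr_deriv (by rw [InnerProductSpace.toDual_apply_apply]; ring)
  have hanti : AntitoneOn φ (Set.Ici 0) := by
    refine antitoneOn_of_hasDerivWithinAt_nonpos (convex_Ici 0)
      (fun s _ => (hφ s).continuousAt.continuousWithinAt) (fun s _ => (hφ s).hasDerivWithinAt) ?_
    intro s hs
    rw [interior_Ici, Set.mem_Ioi] at hs
    have hgap : ⟪gradient f (a + s • v) - gradient f a, v⟫ ≤ L * s * ‖v‖ ^ 2 := by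
      have := inner_gradient_sub_le hlip (a + s • v) a v
      rwa [add_sub_cancel_left, norm_smul, Real.norm_of_nonneg hs.le, mul_assoc, mul_assoc,
        ← sq, ← mul_assoc] at this
    rw [inner_sub_left] at hgap
    linarith
  have hends := hanti Set.self_mem_Ici (Set.mem_Ici.2 zero_le_one) zero_le_one
  norm_num only [φ, v, zero_smul, one_smul, add_zero, add_sub_cancel] at hends
  linarith

theorem StrongConvexOn.add_inner_add_sq_le {g : E → ℝ} {γ : ℝ}
    (hg : StrongConvexOn Set.univ γ g) {a W : E} (hW : ∀ y, g a + ⟪W, y - a⟫ ≤ g y) (y : E) :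
    g a + ⟪W, y - a⟫ + γ / 2 * ‖y - a‖ ^ 2 ≤ g y := by
  have hseg : ∀ s ∈ Set.Ioo (0 : ℝ) 1,
      g a + ⟪W, y - a⟫ + (1 - s) * (γ / 2 * ‖y - a‖ ^ 2) ≤ g y := by
    rintro s ⟨hs₀, hs₁⟩
    have hconv := hg.2 (Set.mem_univ a) (Set.mem_univ y) (sub_nonneg.2 hs₁.le) hs₀.le
      (sub_add_cancel 1 s)
    have hsub := hW ((1 - s) • a + s • y)
    rw [show (1 - s) • a + s • y - a = s • (y - a) by module, real_inner_smul_right] at hsub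
    rw [norm_sub_rev] at hconv
    simp only [smul_eq_mul] at hconv
    have : s * (g a + ⟪W, y - a⟫ + (1 - s) * (γ / 2 * ‖y - a‖ ^ 2)) ≤ s * g y := by
      nlinarith
    exact le_of_mul_le_mul_left this hs₀
  have hlim : Filter.Tendsto (fun s : ℝ => g a + ⟪W, y - a⟫ + (1 - s) * (γ / 2 * ‖y - a‖ ^ 2))
      (nhdsWithin 0 (Set.Ioi 0)) (nhds (g a + ⟪W, y - a⟫ + γ / 2 * ‖y - a‖ ^ 2)) := by
    have hcont : Continuous fun s : ℝ => g a + ⟪W, y - a⟫ + (1 - s) * (γ / 2 * ‖y - a‖ ^ 2) := by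
      fun_prop
    simpa using tendsto_nhdsWithin_of_tendsto_nhds (hcont.tendsto 0)
  exact le_of_tendsto hlim (Filter.eventually_of_mem (Ioo_mem_nhdsGT zero_lt_one) hseg)

theorem add_inner_le_of_subgradient_sub_smul {h : E → ℝ} {ρ : ℝ} (hρ : 0 ≤ ρ) {a b W : E}
    (hW : ∀ y, h a + ⟪W - ρ • (a - b), y - a⟫ ≤ h y) (y : E) :
    h a + ρ / 2 * ‖a - b‖ ^ 2 + ⟪W, y - a⟫ ≤ h y + ρ / 2 * ‖y - b‖ ^ 2 := by
  have hW := hW y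
  rw [show y - b = (y - a) + (a - b) by abel, norm_add_sq_real]
  rw [inner_sub_left, real_inner_smul_left] at hW
  rw [real_inner_comm (a - b) (y - a)]
  nlinarith [sq_nonneg ‖y - a‖]

theorem delayed_prox_step_descent [CompleteSpace E] {m : ℕ} {L ρ γ S : ℝ} (hL : 0 ≤ L)
    (hρ : 0 ≤ ρ) {f : Fin m → E → ℝ} (hf : ∀ j, Differentiable ℝ (f j))
    (hlip : ∀ j u v, ‖gradient (f j) u - gradient (f j) v‖ ≤ L * ‖u - v‖)
    {h : E → ℝ} {a b ε : E}
    (hstrong : StrongConvexOn Set.univ γ (fun y => h y + ρ / 2 * ‖y - a‖ ^ 2))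
    {u : Fin m → E} (hu : ∀ j, ‖a - u j‖ ≤ S) (j₀ : Fin m)
    (hsub : ∀ y, h b + ⟪ε - gradient (f j₀) b - (m : ℝ)⁻¹ • ∑ j, gradient (f j) (u j) +
      gradient (f j₀) (u j₀) - ρ • (b - a), y - b⟫ ≤ h y) :
    ((m : ℝ)⁻¹ * ∑ j, f j b + ρ / 2 * ‖b - a‖ ^ 2 + h b) - ((m : ℝ)⁻¹ * ∑ j, f j a + h a) ≤
      (3 * L / 2 - γ / 2) * ‖b - a‖ ^ 2 + 2 * L * S * ‖b - a‖ + ⟪ε, b - a⟫ := by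
  have hm : 0 < m := j₀.pos
  have hprox := hstrong.add_inner_add_sq_le (add_inner_le_of_subgradient_sub_smul hρ hsub) a
  rw [sub_self, norm_zero, zero_pow two_ne_zero, mul_zero, add_zero] at hprox
  have hsmooth : (m : ℝ)⁻¹ * ∑ j, (f j b - f j a - ⟪gradient (f j) a, b - a⟫) ≤
      L / 2 * ‖b - a‖ ^ 2 :=
    inv_mul_sum_le hm fun j => by
      linarith [image_le_add_inner_gradient_add_sq (hf j) (hlip j) a b]
  have hdelay : (m : ℝ)⁻¹ * ∑ j, ⟪gradient (f j) a - gradient (f j) (u j), b - a⟫ ≤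
      L * S * ‖b - a‖ :=
    inv_mul_sum_le hm fun j => (inner_gradient_sub_le (hlip j) _ _ _).trans (by gcongr; exact hu j)
  have hlead : ⟪gradient (f j₀) (u j₀) - gradient (f j₀) b, b - a⟫ ≤
      L * (‖b - a‖ + S) * ‖b - a‖ := by
    refine (inner_gradient_sub_le (hlip j₀) _ _ _).trans ?_
    have hdist : ‖u j₀ - b‖ ≤ ‖b - a‖ + S := by
      rw [norm_sub_rev]
      exact (norm_sub_le_norm_sub_add_norm_sub b a (u j₀)).trans (by gcongr; exact hu j₀)
    gcongr
  have hreverse : ‖a - b‖ = ‖b - a‖ := norm_sub_rev a b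
  simp only [Finset.sum_sub_distrib, mul_sub, inner_sub_left] at hsmooth hdelay hlead
  simp only [inner_sub_left, inner_add_left, real_inner_smul_left, sum_inner, hreverse] at hprox
  rw [← neg_sub b a] at hprox
  simp only [inner_neg_right, Finset.sum_neg_distrib, mul_neg] at hprox
  linarith

end

theorem stmt_16_general
    {p m τ : ℕ} (hm : 0 < m)
    {L ρ γ : ℝ}
    (hL : 0 < L) (hρ : 0 < ρ)
    (Lf : Fin m → EuclideanSpace ℝ (Fin p) → ℝ)
    (hdiff : ∀ j, Differentiable ℝ (Lf j))
    (hlip : ∀ j (u v : EuclideanSpace ℝ (Fin p)), ‖gradient (Lf j) u - gradient (Lf j) v‖ ≤ L * ‖u - v‖)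
    (h : EuclideanSpace ℝ (Fin p) → ℝ)
    (hstrong : ∀ z : EuclideanSpace ℝ (Fin p), StrongConvexOn Set.univ γ (fun y => h y + ρ / 2 * ‖y - z‖ ^ 2))
    (tj : ℕ → Fin m → ℕ)
    (htj : ∀ t j, t - τ ≤ tj t j ∧ tj t j ≤ t)
    (x : ℕ → EuclideanSpace ℝ (Fin p))
    (eps : ℕ → EuclideanSpace ℝ (Fin p))
    (hsub : ∀ t (y : EuclideanSpace ℝ (Fin p)),
      h (x (t + 1)) + ⟪eps t - gradient (Lf ⟨0, hm⟩) (x (t + 1)) - (((m : ℝ)⁻¹ • ∑ j, gradient (Lf j) (x (tj t j)))) +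
          gradient (Lf ⟨0, hm⟩) (x (tj t ⟨0, hm⟩)) - ρ • (x (t + 1) - x t), y - x (t + 1)⟫ ≤ h y)
    (Δ : ℤ → EuclideanSpace ℝ (Fin p))
    (hΔ : ∀ s : ℤ, 0 ≤ s → Δ s = x (s.toNat + 1) - x s.toNat)
    (t : ℕ) (ht : 1 ≤ t) (δ : ℝ) (hδ : 0 < δ)
    :
    (((m : ℝ)⁻¹ * ∑ j, Lf j (x (t + 1))) + ρ / 2 * ‖x (t + 1) - x t‖ ^ 2 + h (x (t + 1))) - (((m : ℝ)⁻¹ * ∑ j, Lf j (x t)) + ρ / 2 * ‖x t - x (t - 1)‖ ^ 2 + h (x t)) ≤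
      (3 * L / 2 - γ / 2 + L * δ * τ) * ‖Δ (t : ℤ)‖ ^ 2 - ρ / 2 * ‖Δ ((t : ℤ) - 1)‖ ^ 2 +
        L / δ * ∑ k ∈ Finset.Icc 1 τ, ‖Δ ((t : ℤ) - (k : ℤ))‖ ^ 2 + ⟪eps t, Δ (t : ℤ)⟫ := by
  have hΔt : Δ t = x (t + 1) - x t := by simpa using hΔ t (by positivity)
  have hΔt₁ : Δ ((t : ℤ) - 1) = x t - x (t - 1) := by
    rw [hΔ _ (by omega), show ((t : ℤ) - 1).toNat = t - 1 by omega, Nat.sub_add_cancel ht]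
  have hdelay : ∀ j, ‖x t - x (tj t j)‖ ≤ ∑ k ∈ Finset.Icc 1 τ, ‖Δ ((t : ℤ) - (k : ℤ))‖ :=
    fun j => norm_sub_le_sum_Icc_of_delta hΔ (htj t j).2 (by have := (htj t j).1; omega)
  have hstep := delayed_prox_step_descent hL.le hρ.le hdiff hlip (hstrong (x t)) hdelay ⟨0, hm⟩
    (hsub t)
  have hyoung := mul_le_mul_of_nonneg_left
    (two_mul_sum_mul_le (Finset.Icc 1 τ) (fun k => ‖Δ ((t : ℤ) - (k : ℤ))‖) ‖Δ t‖ hδ) hL.le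
  rw [Nat.card_Icc, Nat.add_sub_cancel] at hyoung
  rw [hΔt₁]
  rw [hΔt] at hyoung ⊢
  linear_combination hstep + hyoung

theorem stmt_16
    {p m τ : ℕ} (hp : 1 ≤ p) (hm : 0 < m)
    {L ρ γ : ℝ}
    (hL : 0 < L) (hρ : 0 < ρ) (hγ : 0 < γ)
    (Lf : Fin m → EuclideanSpace ℝ (Fin p) → ℝ)
    (hdiff : ∀ j, Differentiable ℝ (Lf j))
    (hlip : ∀ j (u v : EuclideanSpace ℝ (Fin p)), ‖gradient (Lf j) u - gradient (Lf j) v‖ ≤ L * ‖u - v‖)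
    (h : EuclideanSpace ℝ (Fin p) → ℝ)
    (hconv : ConvexOn ℝ Set.univ h)
    (hstrong : ∀ z : EuclideanSpace ℝ (Fin p), StrongConvexOn Set.univ γ (fun y => h y + ρ / 2 * ‖y - z‖ ^ 2))
    (tj : ℕ → Fin m → ℕ)
    (htj : ∀ t j, t - τ ≤ tj t j ∧ tj t j ≤ t)
    (x : ℕ → EuclideanSpace ℝ (Fin p))
    (eps : ℕ → EuclideanSpace ℝ (Fin p))
    (hsub : ∀ t (y : EuclideanSpace ℝ (Fin p)),
      h (x (t + 1)) + ⟪eps t - gradient (Lf ⟨0, hm⟩) (x (t + 1)) - (((m : ℝ)⁻¹ • ∑ j, gradient (Lf j) (x (tj t j)))) +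
          gradient (Lf ⟨0, hm⟩) (x (tj t ⟨0, hm⟩)) - ρ • (x (t + 1) - x t), y - x (t + 1)⟫ ≤ h y)
    (Δ : ℤ → EuclideanSpace ℝ (Fin p))
    (hΔ : ∀ s : ℤ, 0 ≤ s → Δ s = x (s.toNat + 1) - x s.toNat)
    (hΔneg : ∀ s : ℤ, s < 0 → Δ s = 0)
    (t : ℕ) (ht : 1 ≤ t) (δ : ℝ) (hδ : 0 < δ)
    :
    (((m : ℝ)⁻¹ * ∑ j, Lf j (x (t + 1))) + ρ / 2 * ‖x (t + 1) - x t‖ ^ 2 + h (x (t + 1))) - (((m : ℝ)⁻¹ * ∑ j, Lf j (x t)) + ρ / 2 * ‖x t - x (t - 1)‖ ^ 2 + h (x t)) ≤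
      (3 * L / 2 - γ / 2 + L * δ * τ) * ‖Δ (t : ℤ)‖ ^ 2 - ρ / 2 * ‖Δ ((t : ℤ) - 1)‖ ^ 2 +
        L / δ * ∑ k ∈ Finset.Icc 1 τ, ‖Δ ((t : ℤ) - (k : ℤ))‖ ^ 2 + ⟪eps t, Δ (t : ℤ)⟫ :=
  stmt_16_general hm hL hρ Lf hdiff hlip h hstrong tj htj x eps hsub Δ hΔ t ht δ hδ
end

section
/- (Summed descent with inexact subproblem solutions.) In the inexact setting, assume additionally that ‖ε^t‖² ≤ c₁‖Δ^{(t−1)}‖² for all t ≥ 1 and ε^0 = 0, for some c₁ > 0, and that there exists δ > 0 with γ > 3L + 2Lδτ + 1 and ρ > 2Lτ/δ + c₁. Set c̃ := min{γ/2 − 3L/2 − Lδτ − 1/2, ρ/2 − Lτ/δ − c₁/2} > 0. Then for every T ≥ 1: F(x^{T+1}, x^T) − F(x^1, x^0) ≤ −c̃ Σ_{t=0}^{T} ‖Δ^{(t)}‖². -/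
open scoped RealInnerProductSpace

theorem stmt17_descent {p : ℕ} {L : ℝ} (hL : 0 ≤ L)
    (f : EuclideanSpace ℝ (Fin p) → ℝ) (hf : Differentiable ℝ f)
    (hlip : ∀ u v, ‖gradient f u - gradient f v‖ ≤ L * ‖u - v‖)
    (a b : EuclideanSpace ℝ (Fin p)) :
    f b ≤ f a + ⟪gradient f a, b - a⟫ + L / 2 * ‖b - a‖ ^ 2 := by
  set v := b - a with hv
  have hline : ∀ s : ℝ, HasDerivAt (fun s : ℝ => a + s • v) v s := by
    intro s
    simpa using ((hasDerivAt_id s).smul_const v).const_add a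
  have hfd : ∀ s : ℝ, HasDerivAt (fun s : ℝ => f (a + s • v))
      ⟪gradient f (a + s • v), v⟫ s := by
    intro s
    have h1 : HasFDerivAt f (InnerProductSpace.toDual ℝ _ (gradient f (a + s • v))) (a + s • v) :=
      (hf (a + s • v)).hasGradientAt.hasFDerivAt
    have := h1.comp_hasDerivAt s (hline s)
    simpa [InnerProductSpace.toDual_apply_apply, Function.comp_def] using this
  set g : ℝ → ℝ := fun s => f (a + s • v) - s * ⟪gradient f a, v⟫ - L / 2 * s ^ 2 * ‖v‖ ^ 2 with hg
  have hgd : ∀ s : ℝ, HasDerivAt g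
      (⟪gradient f (a + s • v), v⟫ - ⟪gradient f a, v⟫ - L * s * ‖v‖ ^ 2) s := by
    intro s
    have h2 : HasDerivAt (fun s : ℝ => s * ⟪gradient f a, v⟫) ⟪gradient f a, v⟫ s := by
      simpa using (hasDerivAt_id s).mul_const ⟪gradient f a, v⟫
    have h3 : HasDerivAt (fun s : ℝ => L / 2 * s ^ 2 * ‖v‖ ^ 2) (L * s * ‖v‖ ^ 2) s := by
      have : HasDerivAt (fun s : ℝ => s ^ 2) (2 * s) s := by
        simpa using hasDerivAt_pow 2 s
      have h3' := (this.const_mul (L / 2)).mul_const (‖v‖ ^ 2)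
      rw [show L * s * ‖v‖ ^ 2 = L / 2 * (2 * s) * ‖v‖ ^ 2 by ring]
      exact h3'
    exact ((hfd s).sub h2).sub h3
  have hanti : AntitoneOn g (Set.Icc 0 1) := by
    apply antitoneOn_of_deriv_nonpos (convex_Icc 0 1)
    · exact fun s _ => ((hgd s).continuousAt).continuousWithinAt
    · intro s _; exact (hgd s).differentiableAt.differentiableWithinAt
    · intro s hs
      rw [interior_Icc] at hs
      rw [(hgd s).deriv]
      have h4 : ⟪gradient f (a + s • v) - gradient f a, v⟫ ≤ L * s * ‖v‖ ^ 2 := by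
        calc ⟪gradient f (a + s • v) - gradient f a, v⟫
            ≤ ‖gradient f (a + s • v) - gradient f a‖ * ‖v‖ := real_inner_le_norm _ _
          _ ≤ (L * ‖(a + s • v) - a‖) * ‖v‖ := by
              apply mul_le_mul_of_nonneg_right (hlip _ _) (norm_nonneg _)
          _ = L * s * ‖v‖ ^ 2 := by
              simp [norm_smul, abs_of_pos hs.1]
              ring
      rw [inner_sub_left] at h4
      linarith
  have h01 := hanti (Set.mem_Icc.2 ⟨le_rfl, zero_le_one⟩) (Set.mem_Icc.2 ⟨zero_le_one, le_rfl⟩) zero_le_one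
  have hb : a + v = b := by simp [hv]
  have e0 : g 0 = f a := by
    simp only [hg, zero_smul, add_zero, zero_mul, sub_zero, mul_zero]
    norm_num
  have e1 : g 1 = f b - ⟪gradient f a, v⟫ - L / 2 * ‖v‖ ^ 2 := by
    simp only [hg, one_smul, hb, one_mul, one_pow]
    ring
  rw [e0, e1] at h01
  linarith

theorem stmt17_slope (X Y C : ℝ) (H : ∀ s : ℝ, 0 < s → s ≤ 1 → X ≤ Y + s * C) : X ≤ Y := by
  rcases le_or_gt C 0 with hC | hC
  · have := H 1 one_pos le_rfl; linarith
  · by_contra hXY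
    push_neg at hXY
    set s := min 1 ((X - Y) / (2 * C)) with hs
    have hspos : 0 < s := lt_min one_pos (div_pos (by linarith) (by linarith))
    have h1 := H s hspos (min_le_left _ _)
    have h2 : s * C ≤ (X - Y) / 2 := by
      have : s ≤ (X - Y) / (2 * C) := min_le_right _ _
      calc s * C ≤ (X - Y) / (2 * C) * C := mul_le_mul_of_nonneg_right this hC.le
        _ = (X - Y) / 2 := by field_simp
    linarith

theorem stmt17_tel {p : ℕ} (x : ℕ → EuclideanSpace ℝ (Fin p)) (a b : ℕ) (hab : a ≤ b) :
    ‖x b - x a‖ ≤ ∑ s ∈ Finset.Ico a b, ‖x (s + 1) - x s‖ := by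
  have key : x b - x a = ∑ s ∈ Finset.Ico a b, (x (s + 1) - x s) := by
    rw [Finset.sum_Ico_eq_sub _ hab, Finset.sum_range_sub, Finset.sum_range_sub]
    abel
  rw [key]
  exact norm_sum_le _ _

theorem stmt17_count (g : ℕ → ℝ) (hg : ∀ s, 0 ≤ g s) (τ T : ℕ) :
    ∑ t ∈ Finset.Icc 1 T, ∑ s ∈ Finset.Ico (t - τ) t, g s ≤ τ * ∑ s ∈ Finset.range T, g s := by
  have step1 : ∀ t ∈ Finset.Icc 1 T, ∑ s ∈ Finset.Ico (t - τ) t, g s =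
      ∑ s ∈ Finset.range T, if s ∈ Finset.Ico (t - τ) t then g s else 0 := by
    intro t ht
    rw [Finset.sum_ite_mem, Finset.inter_comm]
    congr 1
    symm
    apply Finset.inter_eq_left.2
    intro s hs
    rw [Finset.mem_Ico] at hs
    rw [Finset.mem_range]
    have := (Finset.mem_Icc.1 ht).2
    omega
  rw [Finset.sum_congr rfl step1, Finset.sum_comm]
  have step2 : ∀ s ∈ Finset.range T,
      (∑ t ∈ Finset.Icc 1 T, if s ∈ Finset.Ico (t - τ) t then g s else 0) ≤ τ * g s := by
    intro s _
    rw [← Finset.sum_filter, Finset.sum_const, nsmul_eq_mul]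
    have hsub : (Finset.Icc 1 T).filter (fun t => s ∈ Finset.Ico (t - τ) t) ⊆
        Finset.Icc (s + 1) (s + τ) := by
      intro t ht
      simp only [Finset.mem_filter, Finset.mem_Icc, Finset.mem_Ico] at ht ⊢
      omega
    have hcard : ((Finset.Icc 1 T).filter (fun t => s ∈ Finset.Ico (t - τ) t)).card ≤ τ := by
      have h1 := Finset.card_le_card hsub
      rw [Nat.card_Icc] at h1
      omega
    exact mul_le_mul_of_nonneg_right (by exact_mod_cast hcard) (hg s)
  calc (∑ s ∈ Finset.range T, ∑ t ∈ Finset.Icc 1 T, if s ∈ Finset.Ico (t - τ) t then g s else 0)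
      ≤ ∑ s ∈ Finset.range T, τ * g s := Finset.sum_le_sum step2
    _ = τ * ∑ s ∈ Finset.range T, g s := by rw [Finset.mul_sum]

theorem stmt17_hstep {p : ℕ} {ρ γ : ℝ} (h : EuclideanSpace ℝ (Fin p) → ℝ)
    (a b w : EuclideanSpace ℝ (Fin p))
    (hstrong : StrongConvexOn Set.univ γ (fun y => h y + ρ / 2 * ‖y - a‖ ^ 2))
    (hw : ∀ y, h b + ⟪w, y - b⟫ ≤ h y) :
    h b - h a ≤ ⟪w, b - a⟫ + (ρ / 2 - γ / 2) * ‖b - a‖ ^ 2 := by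
  set D := ‖b - a‖ ^ 2 with hD
  set I := ⟪w, b - a⟫ with hI
  apply stmt17_slope _ _ ((γ / 2 - ρ / 2) * D)
  intro s hs hs1
  set comb := s • a + (1 - s) • b with hcomb
  have hsc := hstrong.2
  have h1 := @hsc a (Set.mem_univ a) b (Set.mem_univ b) s (1 - s) hs.le (by linarith) (by ring)
  have h2 := hw comb
  have e1 : comb - b = s • (a - b) := by rw [hcomb]; module
  have e2 : comb - a = (1 - s) • (b - a) := by rw [hcomb]; module
  have e3 : ⟪w, comb - b⟫ = -(s * I) := by
    rw [e1, real_inner_smul_right, hI, ← neg_sub b a, inner_neg_right]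
    ring
  have e4 : ‖comb - a‖ ^ 2 = (1 - s) ^ 2 * D := by
    rw [e2, norm_smul, mul_pow, hD, Real.norm_eq_abs, sq_abs]
  have e5 : ‖a - b‖ = ‖b - a‖ := norm_sub_rev _ _
  have e6 : ‖a - a‖ ^ 2 = 0 := by simp
  simp only [smul_eq_mul] at h1
  rw [e3] at h2
  rw [e5, e6, e4] at h1
  rw [← hcomb] at h1
  rw [← hD] at h1
  have key : s * (h b - h a) ≤
      s * ((I + (ρ / 2 - γ / 2) * D) + s * ((γ / 2 - ρ / 2) * D)) := by
    nlinarith [h1, h2]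
  have := (mul_le_mul_iff_right₀ hs).1 key
  linarith

theorem stmt17_shift (f : ℕ → ℝ) (T : ℕ) :
    ∑ u ∈ Finset.range T, f (u + 1) = ∑ t ∈ Finset.Icc 1 T, f t := by
  induction T with
  | zero => simp
  | succ n ih =>
    rw [Finset.sum_range_succ, ih, Finset.sum_Icc_succ_top (by omega)]

set_option maxHeartbeats 1000000 in
theorem stmt_17
    {p m τ : ℕ} (hp : 1 ≤ p) (hm : 0 < m)
    {L ρ γ : ℝ}
    (hL : 0 < L) (hρ : 0 < ρ) (hγ : 0 < γ)
    (Lf : Fin m → EuclideanSpace ℝ (Fin p) → ℝ)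
    (hdiff : ∀ j, Differentiable ℝ (Lf j))
    (hlip : ∀ j (u v : EuclideanSpace ℝ (Fin p)), ‖gradient (Lf j) u - gradient (Lf j) v‖ ≤ L * ‖u - v‖)
    (h : EuclideanSpace ℝ (Fin p) → ℝ)
    (hconv : ConvexOn ℝ Set.univ h)
    (hstrong : ∀ z : EuclideanSpace ℝ (Fin p), StrongConvexOn Set.univ γ (fun y => h y + ρ / 2 * ‖y - z‖ ^ 2))
    (tj : ℕ → Fin m → ℕ)
    (htj : ∀ t j, t - τ ≤ tj t j ∧ tj t j ≤ t)
    (x : ℕ → EuclideanSpace ℝ (Fin p))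
    (eps : ℕ → EuclideanSpace ℝ (Fin p))
    (hsub : ∀ t (y : EuclideanSpace ℝ (Fin p)),
      h (x (t + 1)) + ⟪eps t - gradient (Lf ⟨0, hm⟩) (x (t + 1)) - (((m : ℝ)⁻¹ • ∑ j, gradient (Lf j) (x (tj t j)))) +
          gradient (Lf ⟨0, hm⟩) (x (tj t ⟨0, hm⟩)) - ρ • (x (t + 1) - x t), y - x (t + 1)⟫ ≤ h y)
    (Δ : ℤ → EuclideanSpace ℝ (Fin p))
    (hΔ : ∀ s : ℤ, 0 ≤ s → Δ s = x (s.toNat + 1) - x s.toNat)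
    (hΔneg : ∀ s : ℤ, s < 0 → Δ s = 0)
    (c₁ : ℝ) (hc₁ : 0 < c₁)
    (herr : ∀ t : ℕ, 1 ≤ t → ‖eps t‖ ^ 2 ≤ c₁ * ‖Δ ((t : ℤ) - 1)‖ ^ 2)
    (heps0 : eps 0 = 0)
    (δ : ℝ) (hδ : 0 < δ)
    (hA1 : 3 * L + 2 * L * δ * τ + 1 < γ)
    (hA2 : 2 * L * τ / δ + c₁ < ρ)
    (T : ℕ) (hT : 1 ≤ T)
    :
    (((m : ℝ)⁻¹ * ∑ j, Lf j (x (T + 1))) + ρ / 2 * ‖x (T + 1) - x T‖ ^ 2 + h (x (T + 1))) - (((m : ℝ)⁻¹ * ∑ j, Lf j (x 1)) + ρ / 2 * ‖x 1 - x 0‖ ^ 2 + h (x 1)) ≤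
      -(min (γ / 2 - 3 * L / 2 - L * δ * τ - 1 / 2) (ρ / 2 - L * τ / δ - c₁ / 2)) *
        ∑ t ∈ Finset.range (T + 1), ‖Δ (t : ℤ)‖ ^ 2 := by
  classical
  have hm0 : (m : ℝ) ≠ 0 := Nat.cast_ne_zero.2 hm.ne'
  have hΔn : ∀ s : ℕ, Δ (s : ℤ) = x (s + 1) - x s := by
    intro s
    have := hΔ (s : ℤ) (Int.natCast_nonneg s)
    simpa using this
  set ca := γ / 2 - 3 * L / 2 - L * δ * (τ : ℝ) - 1 / 2 with hca
  set cb := ρ / 2 - L * (τ : ℝ) / δ - c₁ / 2 with hcb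
  have hca0 : 0 < ca := by rw [hca]; linarith
  have hcb0 : 0 < cb := by
    rw [hcb]
    have e : L * (τ : ℝ) / δ = 2 * L * (τ : ℝ) / δ / 2 := by ring
    rw [e]; linarith
  set Ft : ℕ → ℝ := fun t =>
    ((m : ℝ)⁻¹ * ∑ j, Lf j (x (t + 1))) + ρ / 2 * ‖x (t + 1) - x t‖ ^ 2 + h (x (t + 1)) with hFt
  -- the per-step descent inequality
  have key : ∀ u : ℕ, Ft (u + 1) - Ft u ≤
      -ca * ‖Δ ((u + 1 : ℕ) : ℤ)‖ ^ 2
        + L / δ * (∑ s ∈ Finset.Ico (u + 1 - τ) (u + 1), ‖Δ (s : ℤ)‖ ^ 2)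
        + (c₁ / 2 - ρ / 2) * ‖Δ (u : ℤ)‖ ^ 2 := by
    intro u
    set a := x (u + 1) with ha
    set b := x (u + 1 + 1) with hb
    set S := ∑ s ∈ Finset.Ico (u + 1 - τ) (u + 1), ‖Δ (s : ℤ)‖ with hS
    set P := ∑ s ∈ Finset.Ico (u + 1 - τ) (u + 1), ‖Δ (s : ℤ)‖ ^ 2 with hP
    have hDt : Δ ((u + 1 : ℕ) : ℤ) = b - a := hΔn (u + 1)
    have hba : ‖b - a‖ = ‖Δ ((u + 1 : ℕ) : ℤ)‖ := by rw [hDt]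
    set dt := ‖Δ ((u + 1 : ℕ) : ℤ)‖ with hdt
    have hdt0 : 0 ≤ dt := norm_nonneg _
    have hS0 : 0 ≤ S := Finset.sum_nonneg fun s _ => norm_nonneg _
    have hP0 : 0 ≤ P := Finset.sum_nonneg fun s _ => sq_nonneg _
    -- (1) smoothness descent for the average
    have hfstep : (m : ℝ)⁻¹ * ∑ j, Lf j b ≤ (m : ℝ)⁻¹ * ∑ j, Lf j a
        + (m : ℝ)⁻¹ * ∑ j, ⟪gradient (Lf j) a, b - a⟫ + L / 2 * dt ^ 2 := by
      have h2 : ∑ j, Lf j b ≤ ∑ j, (Lf j a + ⟪gradient (Lf j) a, b - a⟫ + L / 2 * ‖b - a‖ ^ 2) :=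
        Finset.sum_le_sum fun j _ => stmt17_descent hL.le (Lf j) (hdiff j) (hlip j) a b
      have h3 : ∑ j, (Lf j a + ⟪gradient (Lf j) a, b - a⟫ + L / 2 * ‖b - a‖ ^ 2)
          = ∑ j, Lf j a + ∑ j, ⟪gradient (Lf j) a, b - a⟫ + (m : ℝ) * (L / 2 * ‖b - a‖ ^ 2) := by
        rw [Finset.sum_add_distrib, Finset.sum_add_distrib, Finset.sum_const, Finset.card_univ,
          Fintype.card_fin, nsmul_eq_mul]
      rw [h3] at h2
      have h4 := mul_le_mul_of_nonneg_left h2 (inv_nonneg.2 (Nat.cast_nonneg m))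
      have h5 : (m : ℝ)⁻¹ * (∑ j, Lf j a + ∑ j, ⟪gradient (Lf j) a, b - a⟫
          + (m : ℝ) * (L / 2 * ‖b - a‖ ^ 2))
          = (m : ℝ)⁻¹ * ∑ j, Lf j a + (m : ℝ)⁻¹ * ∑ j, ⟪gradient (Lf j) a, b - a⟫
            + L / 2 * ‖b - a‖ ^ 2 := by
        field_simp
      rw [h5, hba] at h4
      exact h4
    -- (2) strong convexity step
    have hh : h b - h a ≤
        ⟪eps (u + 1) - gradient (Lf ⟨0, hm⟩) b
            - ((m : ℝ)⁻¹ • ∑ j, gradient (Lf j) (x (tj (u + 1) j)))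
            + gradient (Lf ⟨0, hm⟩) (x (tj (u + 1) ⟨0, hm⟩)) - ρ • (b - a), b - a⟫
          + (ρ / 2 - γ / 2) * ‖b - a‖ ^ 2 :=
      stmt17_hstep h a b _ (hstrong a) (hsub (u + 1))
    -- (3) expand the inner product
    have hWx : ⟪eps (u + 1) - gradient (Lf ⟨0, hm⟩) b
            - ((m : ℝ)⁻¹ • ∑ j, gradient (Lf j) (x (tj (u + 1) j)))
            + gradient (Lf ⟨0, hm⟩) (x (tj (u + 1) ⟨0, hm⟩)) - ρ • (b - a), b - a⟫
        = ⟪eps (u + 1), b - a⟫ - ⟪gradient (Lf ⟨0, hm⟩) b, b - a⟫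
          - (m : ℝ)⁻¹ * ∑ j, ⟪gradient (Lf j) (x (tj (u + 1) j)), b - a⟫
          + ⟪gradient (Lf ⟨0, hm⟩) (x (tj (u + 1) ⟨0, hm⟩)), b - a⟫
          - ρ * ‖b - a‖ ^ 2 := by
      rw [inner_sub_left, inner_add_left, inner_sub_left, inner_sub_left,
        real_inner_smul_left, real_inner_smul_left, sum_inner,
        real_inner_self_eq_norm_sq]
    rw [hWx, hba] at hh
    -- (4) telescoping bounds
    have htel : ∀ j : Fin m, ‖a - x (tj (u + 1) j)‖ ≤ S := by
      intro j
      have h1 := stmt17_tel x (tj (u + 1) j) (u + 1) (htj (u + 1) j).2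
      have h2 : ∑ s ∈ Finset.Ico (tj (u + 1) j) (u + 1), ‖x (s + 1) - x s‖
          = ∑ s ∈ Finset.Ico (tj (u + 1) j) (u + 1), ‖Δ (s : ℤ)‖ :=
        Finset.sum_congr rfl fun s _ => by rw [hΔn s]
      have h3 : ∑ s ∈ Finset.Ico (tj (u + 1) j) (u + 1), ‖Δ (s : ℤ)‖ ≤ S := by
        rw [hS]
        apply Finset.sum_le_sum_of_subset_of_nonneg
        · exact Finset.Ico_subset_Ico (htj (u + 1) j).1 le_rfl
        · exact fun s _ _ => norm_nonneg _
      calc ‖a - x (tj (u + 1) j)‖ = ‖x (u + 1) - x (tj (u + 1) j)‖ := by rw [ha]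
        _ ≤ _ := h1
        _ ≤ S := by rw [h2] at *; exact h3
    have hbtel : ‖b - x (tj (u + 1) ⟨0, hm⟩)‖ ≤ dt + S := by
      have hle : tj (u + 1) ⟨0, hm⟩ ≤ u + 1 := (htj (u + 1) _).2
      have h1 := stmt17_tel x (tj (u + 1) ⟨0, hm⟩) (u + 1 + 1) (le_trans hle (Nat.le_succ _))
      rw [Finset.sum_Ico_succ_top hle] at h1
      have h2 : ∑ s ∈ Finset.Ico (tj (u + 1) ⟨0, hm⟩) (u + 1), ‖x (s + 1) - x s‖
          = ∑ s ∈ Finset.Ico (tj (u + 1) ⟨0, hm⟩) (u + 1), ‖Δ (s : ℤ)‖ :=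
        Finset.sum_congr rfl fun s _ => by rw [hΔn s]
      have h3 : ∑ s ∈ Finset.Ico (tj (u + 1) ⟨0, hm⟩) (u + 1), ‖Δ (s : ℤ)‖ ≤ S := by
        rw [hS]
        apply Finset.sum_le_sum_of_subset_of_nonneg
        · exact Finset.Ico_subset_Ico (htj (u + 1) _).1 le_rfl
        · exact fun s _ _ => norm_nonneg _
      have h4 : ‖x (u + 1 + 1) - x (u + 1)‖ = dt := by rw [hdt, hΔn (u + 1)]
      rw [h2, h4] at h1
      calc ‖b - x (tj (u + 1) ⟨0, hm⟩)‖ = ‖x (u + 1 + 1) - x (tj (u + 1) ⟨0, hm⟩)‖ := by rw [hb]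
        _ ≤ _ := h1
        _ ≤ dt + S := by linarith
    -- (5) inner product bounds
    have hI1 : (m : ℝ)⁻¹ * ∑ j, ⟪gradient (Lf j) a, b - a⟫
        - (m : ℝ)⁻¹ * ∑ j, ⟪gradient (Lf j) (x (tj (u + 1) j)), b - a⟫ ≤ L * (S * dt) := by
      have h1 : ∀ j : Fin m, ⟪gradient (Lf j) a, b - a⟫
          - ⟪gradient (Lf j) (x (tj (u + 1) j)), b - a⟫ ≤ L * (S * dt) := by
        intro j
        have h2 : ⟪gradient (Lf j) a - gradient (Lf j) (x (tj (u + 1) j)), b - a⟫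
            ≤ ‖gradient (Lf j) a - gradient (Lf j) (x (tj (u + 1) j))‖ * ‖b - a‖ :=
          real_inner_le_norm _ _
        rw [inner_sub_left] at h2
        have h3 : ‖gradient (Lf j) a - gradient (Lf j) (x (tj (u + 1) j))‖ * ‖b - a‖
            ≤ (L * S) * dt := by
          rw [hba]
          apply mul_le_mul_of_nonneg_right _ hdt0
          calc ‖gradient (Lf j) a - gradient (Lf j) (x (tj (u + 1) j))‖
              ≤ L * ‖a - x (tj (u + 1) j)‖ := hlip j _ _
            _ ≤ L * S := mul_le_mul_of_nonneg_left (htel j) hL.le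
        calc ⟪gradient (Lf j) a, b - a⟫ - ⟪gradient (Lf j) (x (tj (u + 1) j)), b - a⟫
            ≤ ‖gradient (Lf j) a - gradient (Lf j) (x (tj (u + 1) j))‖ * ‖b - a‖ := h2
          _ ≤ (L * S) * dt := h3
          _ = L * (S * dt) := by ring
      have h4 : ∑ j, ⟪gradient (Lf j) a, b - a⟫
          - ∑ j, ⟪gradient (Lf j) (x (tj (u + 1) j)), b - a⟫ ≤ (m : ℝ) * (L * (S * dt)) := by
        rw [← Finset.sum_sub_distrib]
        calc (∑ j, (⟪gradient (Lf j) a, b - a⟫ - ⟪gradient (Lf j) (x (tj (u + 1) j)), b - a⟫))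
            ≤ ∑ _j : Fin m, L * (S * dt) := Finset.sum_le_sum fun j _ => h1 j
          _ = (m : ℝ) * (L * (S * dt)) := by
              rw [Finset.sum_const, Finset.card_univ, Fintype.card_fin, nsmul_eq_mul]
      have h5 := mul_le_mul_of_nonneg_left h4 (inv_nonneg.2 (Nat.cast_nonneg m))
      calc (m : ℝ)⁻¹ * ∑ j, ⟪gradient (Lf j) a, b - a⟫
            - (m : ℝ)⁻¹ * ∑ j, ⟪gradient (Lf j) (x (tj (u + 1) j)), b - a⟫
          = (m : ℝ)⁻¹ * (∑ j, ⟪gradient (Lf j) a, b - a⟫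
            - ∑ j, ⟪gradient (Lf j) (x (tj (u + 1) j)), b - a⟫) := by ring
        _ ≤ (m : ℝ)⁻¹ * ((m : ℝ) * (L * (S * dt))) := h5
        _ = L * (S * dt) := by field_simp
    have hI2 : ⟪gradient (Lf ⟨0, hm⟩) (x (tj (u + 1) ⟨0, hm⟩)), b - a⟫
        - ⟪gradient (Lf ⟨0, hm⟩) b, b - a⟫ ≤ L * dt ^ 2 + L * (S * dt) := by
      have h2 : ⟪gradient (Lf ⟨0, hm⟩) (x (tj (u + 1) ⟨0, hm⟩)) - gradient (Lf ⟨0, hm⟩) b, b - a⟫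
          ≤ ‖gradient (Lf ⟨0, hm⟩) (x (tj (u + 1) ⟨0, hm⟩)) - gradient (Lf ⟨0, hm⟩) b‖ * ‖b - a‖ :=
        real_inner_le_norm _ _
      rw [inner_sub_left] at h2
      have h3 : ‖gradient (Lf ⟨0, hm⟩) (x (tj (u + 1) ⟨0, hm⟩)) - gradient (Lf ⟨0, hm⟩) b‖ * ‖b - a‖
          ≤ (L * (dt + S)) * dt := by
        rw [hba]
        apply mul_le_mul_of_nonneg_right _ hdt0
        calc ‖gradient (Lf ⟨0, hm⟩) (x (tj (u + 1) ⟨0, hm⟩)) - gradient (Lf ⟨0, hm⟩) b‖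
            ≤ L * ‖x (tj (u + 1) ⟨0, hm⟩) - b‖ := hlip _ _ _
          _ = L * ‖b - x (tj (u + 1) ⟨0, hm⟩)‖ := by rw [norm_sub_rev]
          _ ≤ L * (dt + S) := mul_le_mul_of_nonneg_left hbtel hL.le
      calc ⟪gradient (Lf ⟨0, hm⟩) (x (tj (u + 1) ⟨0, hm⟩)), b - a⟫
            - ⟪gradient (Lf ⟨0, hm⟩) b, b - a⟫ ≤ (L * (dt + S)) * dt := le_trans h2 h3
        _ = L * dt ^ 2 + L * (S * dt) := by ring
    have hI3 : ⟪eps (u + 1), b - a⟫ ≤ c₁ / 2 * ‖Δ (u : ℤ)‖ ^ 2 + 1 / 2 * dt ^ 2 := by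
      have h1 : ⟪eps (u + 1), b - a⟫ ≤ ‖eps (u + 1)‖ * ‖b - a‖ := real_inner_le_norm _ _
      rw [hba] at h1
      have h2 := herr (u + 1) (by omega)
      have hcast : ((u + 1 : ℕ) : ℤ) - 1 = (u : ℤ) := by push_cast; ring
      rw [hcast] at h2
      nlinarith [sq_nonneg (‖eps (u + 1)‖ - dt), norm_nonneg (eps (u + 1)), hdt0]
    -- (6) quadratic bound on S * dt
    have hSd : S * dt ≤ δ / 2 * (τ : ℝ) * dt ^ 2 + 1 / (2 * δ) * P := by
      have h1 : ∀ s ∈ Finset.Ico (u + 1 - τ) (u + 1),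
          ‖Δ (s : ℤ)‖ * dt ≤ δ / 2 * dt ^ 2 + 1 / (2 * δ) * ‖Δ (s : ℤ)‖ ^ 2 := by
        intro s _
        have h0 : 0 ≤ (δ * dt - ‖Δ (s : ℤ)‖) ^ 2 := sq_nonneg _
        have hδ' : 0 < 2 * δ := by linarith
        rw [← sub_nonneg]
        have e : δ / 2 * dt ^ 2 + 1 / (2 * δ) * ‖Δ (s : ℤ)‖ ^ 2 - ‖Δ (s : ℤ)‖ * dt
            = (δ * dt - ‖Δ (s : ℤ)‖) ^ 2 / (2 * δ) := by field_simp; ring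
        rw [e]
        positivity
      have hcard : ((Finset.Ico (u + 1 - τ) (u + 1)).card : ℝ) ≤ (τ : ℝ) := by
        rw [Nat.card_Ico]
        have hn : u + 1 - (u + 1 - τ) ≤ τ := by omega
        exact_mod_cast hn
      calc S * dt = ∑ s ∈ Finset.Ico (u + 1 - τ) (u + 1), ‖Δ (s : ℤ)‖ * dt := by
            rw [hS, Finset.sum_mul]
        _ ≤ ∑ s ∈ Finset.Ico (u + 1 - τ) (u + 1),
              (δ / 2 * dt ^ 2 + 1 / (2 * δ) * ‖Δ (s : ℤ)‖ ^ 2) := Finset.sum_le_sum h1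
        _ = ((Finset.Ico (u + 1 - τ) (u + 1)).card : ℝ) * (δ / 2 * dt ^ 2)
              + 1 / (2 * δ) * P := by
            rw [Finset.sum_add_distrib, Finset.sum_const, nsmul_eq_mul, ← Finset.mul_sum, hP]
        _ ≤ δ / 2 * (τ : ℝ) * dt ^ 2 + 1 / (2 * δ) * P := by
            have := mul_le_mul_of_nonneg_right hcard
              (mul_nonneg (by linarith : (0:ℝ) ≤ δ / 2) (sq_nonneg dt))
            nlinarith [this]
    have hSdL := mul_le_mul_of_nonneg_left hSd hL.le
    -- (7) assemble
    have hFt1 : Ft (u + 1) = (m : ℝ)⁻¹ * ∑ j, Lf j b + ρ / 2 * dt ^ 2 + h b := by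
      rw [hFt]
      simp only
      rw [hba]
    have hFt0 : Ft u = (m : ℝ)⁻¹ * ∑ j, Lf j a + ρ / 2 * ‖Δ (u : ℤ)‖ ^ 2 + h a := by
      rw [hFt]
      simp only
      rw [hΔn u]
    rw [hFt1, hFt0]
    have hLδ : L / δ * P = L * (1 / (2 * δ) * P) + L * (1 / (2 * δ) * P) := by
      field_simp
      ring
    rw [hca]
    linarith [hfstep, hh, hI1, hI2, hI3, hSdL]
  -- summation
  have hsum : Ft T - Ft 0 ≤ -ca * (∑ u ∈ Finset.range T, ‖Δ ((u + 1 : ℕ) : ℤ)‖ ^ 2)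
      + L / δ * (∑ u ∈ Finset.range T, ∑ s ∈ Finset.Ico (u + 1 - τ) (u + 1), ‖Δ (s : ℤ)‖ ^ 2)
      + (c₁ / 2 - ρ / 2) * (∑ u ∈ Finset.range T, ‖Δ (u : ℤ)‖ ^ 2) := by
    rw [← Finset.sum_range_sub Ft T]
    calc ∑ u ∈ Finset.range T, (Ft (u + 1) - Ft u)
        ≤ ∑ u ∈ Finset.range T, (-ca * ‖Δ ((u + 1 : ℕ) : ℤ)‖ ^ 2
            + L / δ * (∑ s ∈ Finset.Ico (u + 1 - τ) (u + 1), ‖Δ (s : ℤ)‖ ^ 2)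
            + (c₁ / 2 - ρ / 2) * ‖Δ (u : ℤ)‖ ^ 2) := Finset.sum_le_sum fun u _ => key u
      _ = _ := by
          rw [Finset.sum_add_distrib, Finset.sum_add_distrib, ← Finset.mul_sum, ← Finset.mul_sum,
            ← Finset.mul_sum]
  have sumP : ∑ u ∈ Finset.range T, ∑ s ∈ Finset.Ico (u + 1 - τ) (u + 1), ‖Δ (s : ℤ)‖ ^ 2
      ≤ (τ : ℝ) * ∑ s ∈ Finset.range T, ‖Δ (s : ℤ)‖ ^ 2 := by
    rw [stmt17_shift (fun t => ∑ s ∈ Finset.Ico (t - τ) t, ‖Δ (s : ℤ)‖ ^ 2) T]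
    exact stmt17_count (fun s => ‖Δ (s : ℤ)‖ ^ 2) (fun s => sq_nonneg _) τ T
  have hmid := mul_le_mul_of_nonneg_left sumP (by positivity : (0:ℝ) ≤ L / δ)
  -- final assembly
  set A := ∑ u ∈ Finset.range T, ‖Δ ((u + 1 : ℕ) : ℤ)‖ ^ 2 with hA
  set B := ∑ u ∈ Finset.range T, ‖Δ (u : ℤ)‖ ^ 2 with hB
  have hA0 : 0 ≤ A := Finset.sum_nonneg fun s _ => sq_nonneg _
  have hB0 : 0 ≤ B := Finset.sum_nonneg fun s _ => sq_nonneg _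
  have hS' : ∑ t ∈ Finset.range (T + 1), ‖Δ (t : ℤ)‖ ^ 2 = A + ‖Δ ((0 : ℕ) : ℤ)‖ ^ 2 := by
    rw [Finset.sum_range_succ' (fun t => ‖Δ (t : ℤ)‖ ^ 2) T]
  have hd0B : ‖Δ ((0 : ℕ) : ℤ)‖ ^ 2 ≤ B :=
    Finset.single_le_sum (f := fun u : ℕ => ‖Δ (u : ℤ)‖ ^ 2) (fun i _ => sq_nonneg _)
      (Finset.mem_range.2 hT)
  have hgoalL : (((m : ℝ)⁻¹ * ∑ j, Lf j (x (T + 1))) + ρ / 2 * ‖x (T + 1) - x T‖ ^ 2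
      + h (x (T + 1))) - (((m : ℝ)⁻¹ * ∑ j, Lf j (x 1)) + ρ / 2 * ‖x 1 - x 0‖ ^ 2 + h (x 1))
      = Ft T - Ft 0 := by rw [hFt]
  rw [hgoalL, hS']
  clear_value ca cb Ft A B
  have hmin1 : min ca cb ≤ ca := min_le_left _ _
  have hmin2 : min ca cb ≤ cb := min_le_right _ _
  have hminpos : 0 < min ca cb := lt_min hca0 hcb0
  have hfin1 : Ft T - Ft 0 ≤ -ca * A - cb * B := by
    have : L / δ * ((τ : ℝ) * B) + (c₁ / 2 - ρ / 2) * B = -cb * B := by rw [hcb]; ring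
    linarith [hsum, hmid]
  have e1 : min ca cb * A ≤ ca * A := mul_le_mul_of_nonneg_right hmin1 hA0
  have e2 : min ca cb * B ≤ cb * B := mul_le_mul_of_nonneg_right hmin2 hB0
  have e3 : min ca cb * ‖Δ ((0 : ℕ) : ℤ)‖ ^ 2 ≤ min ca cb * B :=
    mul_le_mul_of_nonneg_left hd0B hminpos.le
  calc Ft T - Ft 0 ≤ -ca * A - cb * B := hfin1
    _ ≤ -(min ca cb) * (A + ‖Δ ((0 : ℕ) : ℤ)‖ ^ 2) := by linarith
end
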